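/- arXiv:0710.1222 — 9 statements merged into one kernel-verified Lean document; each statement's English description precedes it below -/
import Mathlib

section
/- For all natural numbers p and k, one has ∑_{t=0}^{p} 2^{p−t} · binom(t,k) = ∑_{l=k+1}^{p+1} binom(p+1,l). -/
/-!
Both sides satisfy `f (p + 1) = 2 * f p + binom(p + 1, k)`: the left side because it is a
Horner-type sum, the right side by Pascal's rule, which splits a tail sum of row `p + 2` into two
copies of the tail of row `p + 1` plus the one boundary term `binom(p + 1, k)`.
-/

open Finset

theorem sum_Icc_choose_succ (n k : ℕ) :
    ∑ l ∈ Icc (k + 1) (n + 1), (n + 1).choose l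
      = 2 * ∑ l ∈ Icc (k + 1) n, n.choose l + n.choose k := by
  rcases lt_or_ge n k with hnk | hkn
  · simp [Nat.choose_eq_zero_of_lt hnk, Icc_eq_empty_of_lt, hnk, hnk.trans (Nat.lt_succ_self k)]
  have shift (f : ℕ → ℕ) : ∑ l ∈ Icc (k + 1) (n + 1), f l = ∑ j ∈ Icc k n, f (j + 1) := by
    rw [← map_add_right_Icc, sum_map]
    rfl
  have head : ∑ j ∈ Icc k n, n.choose j = n.choose k + ∑ l ∈ Icc (k + 1) n, n.choose l := by
    rw [Icc_add_one_left_eq_Ioc, add_sum_Ioc_eq_sum_Icc hkn]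
  have tail : ∑ j ∈ Icc k n, n.choose (j + 1) = ∑ l ∈ Icc (k + 1) n, n.choose l := by
    rw [← shift, sum_Icc_succ_top (by omega), Nat.choose_succ_self, add_zero]
  simp only [shift, Nat.choose_succ_succ', sum_add_distrib, head, tail]
  ring

theorem sum_range_succ_pow_sub_mul {R : Type*} [CommSemiring R] (x : R) (a : ℕ → R) (n : ℕ) :
    ∑ t ∈ range (n + 2), x ^ (n + 1 - t) * a t
      = x * ∑ t ∈ range (n + 1), x ^ (n - t) * a t + a (n + 1) := by
  rw [sum_range_succ, Nat.sub_self, pow_zero, one_mul, mul_sum]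
  congr 1
  refine sum_congr rfl fun t ht => ?_
  rw [Nat.sub_add_comm (Nat.le_of_lt_succ (mem_range.1 ht)), pow_succ']
  ring

theorem sum_range_two_pow_mul_choose (p k : ℕ) :
    ∑ t ∈ range (p + 1), 2 ^ (p - t) * t.choose k = ∑ l ∈ Icc (k + 1) (p + 1), (p + 1).choose l := by
  induction p with
  | zero => cases k <;> simp
  | succ p ih => rw [sum_range_succ_pow_sub_mul, ih, sum_Icc_choose_succ (p + 1)]

/-- For all natural numbers `p` and `k`,
`∑_{t=0}^{p} 2^(p-t) * binom(t,k) = ∑_{l=k+1}^{p+1} binom(p+1,l)` (sums in `ℤ`). -/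
theorem stmt_2 (p k : ℕ) :
    ∑ t ∈ Finset.range (p + 1), (2 : ℤ) ^ (p - t) * (Nat.choose t k : ℤ)
      = ∑ l ∈ Finset.Icc (k + 1) (p + 1), (Nat.choose (p + 1) l : ℤ) := by
  exact_mod_cast sum_range_two_pow_mul_choose p k
end

section
/- For all natural numbers l and n with 1 ≤ l ≤ n, S(l, n+1) = −2 · S(l, n). -/
/-- `S(l,n) = (-1)^n * ∑_{i=0}^{n} ∑_{p=0}^{i} (-1)^p * binom(n+1, i-p) * p^l`,
with the convention `0^0 = 1`. -/
def S (l n : ℕ) : ℚ :=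
  (-1) ^ n * ∑ i ∈ Finset.range (n + 1), ∑ p ∈ Finset.range (i + 1),
    (-1) ^ p * (Nat.choose (n + 1) (i - p) : ℚ) * (p : ℚ) ^ l

/-- `C(l,n) = (-1)^(n-l) * ∑_{k=1}^{n} ((2^n - 2^(n-k))/(k+1))
  * ∑_{t=0}^{k+1} (-1)^t * binom(k+1, t) * t^(l+1)`. -/
def C (l n : ℕ) : ℚ :=
  (-1) ^ (n - l) * ∑ k ∈ Finset.Icc 1 n,
    (((2 : ℚ) ^ n - (2 : ℚ) ^ (n - k)) / (k + 1)) *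
      ∑ t ∈ Finset.range (k + 2), (-1) ^ t * (Nat.choose (k + 1) t : ℚ) * (t : ℚ) ^ (l + 1)

open Finset

/-- Alternating partial power sum `∑_{p=0}^{j} (-1)^p p^l`. -/
def Kk (l j : ℕ) : ℚ := ∑ p ∈ Finset.range (j+1), (-1:ℚ)^p * (p:ℚ)^l

/-- The `l`-th alternating moment of binomial coefficients vanishes for `l < m`. -/
lemma alt_sum : ∀ l m : ℕ, l < m →
    ∑ r ∈ Finset.range (m+1), (-1:ℚ)^r * (m.choose r : ℚ) * (r:ℚ)^l = 0 := by
  intro l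
  induction l using Nat.strong_induction_on with
  | _ l ih =>
    intro m hm
    match l, m, hm with
    | 0, m, hm =>
      have h := Int.alternating_sum_range_choose_of_ne (n := m) (by omega)
      have h2 : ((∑ i ∈ Finset.range (m+1), (-1:ℤ)^i * (m.choose i : ℤ) : ℤ) : ℚ) = 0 := by
        rw [h]; norm_num
      push_cast at h2
      simpa using h2
    | (k+1), (t+1), hm =>
      rw [Finset.sum_range_succ']
      have h0 : (-1:ℚ)^0 * ((t+1).choose 0 : ℚ) * ((0:ℕ):ℚ)^(k+1) = 0 := by norm_num
      rw [h0, add_zero]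
      have key : ∀ s ∈ Finset.range (t+1),
          (-1:ℚ)^(s+1) * ((t+1).choose (s+1) : ℚ) * ((s+1:ℕ):ℚ)^(k+1)
          = ∑ j ∈ Finset.range (k+1), (k.choose j : ℚ) *
              (-(t+1) * ((-1:ℚ)^s * (t.choose s : ℚ) * (s:ℚ)^j)) := by
        intro s hs
        have hch : ((t+1).choose (s+1) : ℚ) * ((s:ℚ)+1) = ((t:ℚ)+1) * (t.choose s : ℚ) := by
          have h := Nat.add_one_mul_choose_eq t s
          have h2 : ((Nat.succ t * t.choose s : ℕ) : ℚ) = (((t+1).choose (s+1) * (s+1) : ℕ) : ℚ) := by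
            rw [h]
          push_cast at h2
          linarith [h2]
        have hpow : ((s:ℚ)+1)^(k+1) = ((s:ℚ)+1) * ∑ j ∈ Finset.range (k+1), (s:ℚ)^j * (k.choose j : ℚ) := by
          rw [pow_succ']
          congr 1
          rw [add_pow]
          refine Finset.sum_congr rfl fun j hj => by ring
        push_cast
        rw [hpow, Finset.mul_sum, Finset.mul_sum]
        refine Finset.sum_congr rfl fun j hj => ?_
        have e1 : (-1:ℚ)^(s+1) * ((t+1).choose (s+1) : ℚ) * (((s:ℚ)+1) * ((s:ℚ)^j * (k.choose j:ℚ)))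
            = (-1:ℚ)^(s+1) * ((((t+1).choose (s+1) : ℚ)) * ((s:ℚ)+1)) * ((s:ℚ)^j * (k.choose j:ℚ)) := by
          ring
        rw [e1, hch, pow_succ]
        ring
      rw [Finset.sum_congr rfl key, Finset.sum_comm]
      rw [Finset.sum_eq_zero]
      intro j hj
      have hj' := Finset.mem_range.mp hj
      rw [← Finset.mul_sum, ← Finset.mul_sum, ih j (by omega) t (by omega), mul_zero, mul_zero]

/-- Triangle sum reindexing `(i, p) ↦ (p, i - p)`. -/
lemma swap1 (n : ℕ) (g : ℕ → ℕ → ℚ) :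
    ∑ i ∈ range (n+1), ∑ p ∈ range (i+1), g p (i-p)
      = ∑ p ∈ range (n+1), ∑ m ∈ range (n+1-p), g p m := by
  rw [Finset.sum_sigma', Finset.sum_sigma']
  refine Finset.sum_nbij' (fun x => ⟨x.2, x.1 - x.2⟩) (fun x => ⟨x.1 + x.2, x.1⟩)
    ?_ ?_ ?_ ?_ ?_
  · rintro ⟨a, b⟩ h
    simp only [Finset.mem_sigma, Finset.mem_range] at h ⊢
    omega
  · rintro ⟨a, b⟩ h
    simp only [Finset.mem_sigma, Finset.mem_range] at h ⊢
    omega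
  · rintro ⟨a, b⟩ h
    simp only [Finset.mem_sigma, Finset.mem_range] at h
    refine Sigma.ext ?_ ?_ <;> simp <;> omega
  · rintro ⟨a, b⟩ h
    simp only [Finset.mem_sigma, Finset.mem_range] at h
    refine Sigma.ext ?_ ?_ <;> simp
  · rintro ⟨a, b⟩ h
    rfl

/-- Symmetric triangle sum swap. -/
lemma tri_comm (n : ℕ) (f : ℕ → ℕ → ℚ) :
    ∑ p ∈ range (n+1), ∑ m ∈ range (n+1-p), f p m
      = ∑ m ∈ range (n+1), ∑ p ∈ range (n+1-m), f p m := by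
  rw [Finset.sum_sigma', Finset.sum_sigma']
  refine Finset.sum_nbij' (fun x => ⟨x.2, x.1⟩) (fun x => ⟨x.2, x.1⟩) ?_ ?_ ?_ ?_ ?_
  · rintro ⟨a, b⟩ h
    simp only [Finset.mem_sigma, Finset.mem_range] at h ⊢
    omega
  · rintro ⟨a, b⟩ h
    simp only [Finset.mem_sigma, Finset.mem_range] at h ⊢
    omega
  · rintro ⟨a, b⟩ h; rfl
  · rintro ⟨a, b⟩ h; rfl
  · rintro ⟨a, b⟩ h; rfl

lemma S_eq (l n : ℕ) :
    S l n = (-1)^n * ∑ m ∈ range (n+1), ((n+1).choose m : ℚ) * Kk l (n-m) := by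
  unfold S
  congr 1
  rw [swap1 n (fun p m => (-1:ℚ)^p * ((n+1).choose m : ℚ) * (p:ℚ)^l)]
  rw [tri_comm n (fun p m => (-1:ℚ)^p * ((n+1).choose m : ℚ) * (p:ℚ)^l)]
  refine Finset.sum_congr rfl fun m hm => ?_
  have hm' := Finset.mem_range.mp hm
  have h1 : n + 1 - m = (n - m) + 1 := by omega
  rw [h1, Kk, Finset.mul_sum]
  exact Finset.sum_congr rfl fun p hp => by ring

lemma Kk_zero (l : ℕ) (hl : 1 ≤ l) : Kk l 0 = 0 := by
  unfold Kk
  rw [Finset.sum_range_one]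
  simp [zero_pow (by omega : l ≠ 0)]

lemma Kk_succ (l j : ℕ) : Kk l (j+1) = Kk l j + (-1:ℚ)^(j+1) * ((j+1:ℕ):ℚ)^l := by
  unfold Kk
  rw [Finset.sum_range_succ]

lemma E_zero (l n : ℕ) (hl : 1 ≤ l) (hln : l ≤ n) :
    ∑ m ∈ range (n+1), ((n+1).choose m : ℚ) * ((-1:ℚ)^((n-m)+1) * (((n-m)+1:ℕ):ℚ)^l) = 0 := by
  rw [← Finset.sum_range_reflect]
  have step : ∀ j ∈ range (n+1),
      ((n+1).choose (n + 1 - 1 - j) : ℚ) * ((-1:ℚ)^((n-(n+1-1-j))+1) * (((n-(n+1-1-j))+1:ℕ):ℚ)^l)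
      = (-1:ℚ)^(j+1) * ((n+1).choose (j+1) : ℚ) * ((j+1:ℕ):ℚ)^l := by
    intro j hj
    have hj' := Finset.mem_range.mp hj
    have e1 : n + 1 - 1 - j = n - j := by omega
    have e2 : n - (n - j) = j := by omega
    have e3 : (n+1).choose (n-j) = (n+1).choose (j+1) := by
      have := Nat.choose_symm (n := n+1) (k := j+1) (by omega)
      have e4 : n + 1 - (j+1) = n - j := by omega
      rw [e4] at this
      exact this
    rw [e1, e2, e3]
    ring
  rw [Finset.sum_congr rfl step]
  have := alt_sum l (n+1) (by omega)
  rw [Finset.sum_range_succ'] at this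
  have h0 : (-1:ℚ)^0 * ((n+1).choose 0 : ℚ) * ((0:ℕ):ℚ)^l = 0 := by
    simp [zero_pow (by omega : l ≠ 0)]
  rw [h0, add_zero] at this
  calc ∑ j ∈ range (n+1), (-1:ℚ)^(j+1) * ((n+1).choose (j+1) : ℚ) * ((j+1:ℕ):ℚ)^l
      = ∑ j ∈ range (n+1), (-1:ℚ)^(j+1) * ((n+1).choose (j+1) : ℚ) * ((j:ℚ)+1)^l := by
        refine Finset.sum_congr rfl fun j _ => by push_cast; ring
    _ = 0 := by
        rw [← this]
        refine Finset.sum_congr rfl fun j _ => by push_cast; ring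

lemma T_succ (l n : ℕ) (hl : 1 ≤ l) (hln : l ≤ n) :
    ∑ m ∈ range (n+2), ((n+2).choose m : ℚ) * Kk l (n+1-m)
      = 2 * ∑ m ∈ range (n+1), ((n+1).choose m : ℚ) * Kk l (n-m) := by
  set T : ℚ := ∑ m ∈ range (n+1), ((n+1).choose m : ℚ) * Kk l (n-m) with hT
  have hU : ∑ m ∈ range (n+2), ((n+1).choose m : ℚ) * Kk l (n+1-m) = T := by
    rw [Finset.sum_range_succ]
    have hlast : ((n+1).choose (n+1) : ℚ) * Kk l (n+1-(n+1)) = 0 := by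
      simp [Kk_zero l hl]
    rw [hlast, add_zero]
    have step : ∀ m ∈ range (n+1),
        ((n+1).choose m : ℚ) * Kk l (n+1-m)
        = ((n+1).choose m : ℚ) * Kk l (n-m)
          + ((n+1).choose m : ℚ) * ((-1:ℚ)^((n-m)+1) * (((n-m)+1:ℕ):ℚ)^l) := by
      intro m hm
      have hm' := Finset.mem_range.mp hm
      have e1 : n + 1 - m = (n - m) + 1 := by omega
      rw [e1, Kk_succ]
      ring
    rw [Finset.sum_congr rfl step, Finset.sum_add_distrib, E_zero l n hl hln, add_zero]
  rw [Finset.sum_range_succ']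
  have step2 : ∀ s ∈ range (n+1),
      ((n+2).choose (s+1) : ℚ) * Kk l (n+1-(s+1))
      = ((n+1).choose s : ℚ) * Kk l (n-s) + ((n+1).choose (s+1) : ℚ) * Kk l (n-s) := by
    intro s hs
    have e1 : n + 1 - (s+1) = n - s := by omega
    have e2 : (n+2).choose (s+1) = (n+1).choose s + (n+1).choose (s+1) :=
      Nat.choose_succ_succ (n+1) s
    rw [e1, e2]
    push_cast
    ring
  rw [Finset.sum_congr rfl step2, Finset.sum_add_distrib]
  rw [Finset.sum_range_succ'] at hU
  have e0 : ((n+2).choose 0 : ℚ) * Kk l (n+1-0) = ((n+1).choose 0 : ℚ) * Kk l (n+1-0) := by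
    norm_num
  have estep : ∀ s ∈ range (n+1),
      ((n+1).choose (s+1) : ℚ) * Kk l (n+1-(s+1)) = ((n+1).choose (s+1) : ℚ) * Kk l (n-s) := by
    intro s hs
    have e1 : n + 1 - (s+1) = n - s := by omega
    rw [e1]
  rw [Finset.sum_congr rfl estep] at hU
  rw [e0]
  linarith [hU]

/-- For all `l, n` with `1 ≤ l ≤ n`, `S(l, n+1) = -2 * S(l, n)`. -/
theorem stmt_4 (l n : ℕ) (hl : 1 ≤ l) (hln : l ≤ n) : S l (n + 1) = -2 * S l n := by
  rw [S_eq l (n+1), S_eq l n]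
  have h := T_succ l n hl hln
  rw [show n + 1 + 1 = n + 2 from rfl, h]
  ring
end

section
/- For all natural numbers l and n with l ≤ n, C(l, n+1) = −2 · C(l, n). -/
open Finset

lemma alt_sum_zero : ∀ j m : ℕ, j < m →
    ∑ t ∈ Finset.range (m + 1), (-1 : ℚ) ^ t * (m.choose t : ℚ) * (t : ℚ) ^ j = 0 := by
  intro j
  induction j using Nat.strong_induction_on with
  | _ j IH =>
    intro m hm
    match j with
    | 0 =>
      have h0 : (∑ i ∈ range (m + 1), (-1 : ℤ) ^ i * (m.choose i : ℤ)) = 0 :=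
        Int.alternating_sum_range_choose_of_ne (by omega : m ≠ 0)
      have h1 : ((∑ i ∈ range (m + 1), (-1 : ℤ) ^ i * (m.choose i : ℤ) : ℤ) : ℚ) = 0 := by
        rw [h0]; norm_num
      push_cast at h1
      simpa [pow_zero, mul_one] using h1
    | j' + 1 =>
      obtain ⟨M, rfl⟩ : ∃ M, m = M + 1 := ⟨m - 1, by omega⟩
      have hj'M : j' < M := by omega
      rw [Finset.sum_range_succ']
      have h0 : (-1 : ℚ) ^ 0 * (((M + 1).choose 0 : ℕ) : ℚ) * ((0 : ℕ) : ℚ) ^ (j' + 1) = 0 := by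
        simp
      rw [h0, add_zero]
      have step : ∀ i ∈ range (M + 1),
          (-1 : ℚ) ^ (i + 1) * (((M + 1).choose (i + 1) : ℕ) : ℚ) * (((i + 1 : ℕ)) : ℚ) ^ (j' + 1)
          = ∑ p ∈ range (j' + 1),
              (-((M : ℚ) + 1) * (j'.choose p : ℚ)) * ((-1 : ℚ) ^ i * (M.choose i : ℚ) * (i : ℚ) ^ p) := by
        intro i _
        have hc : (((M + 1).choose (i + 1) : ℕ) : ℚ) * ((i : ℚ) + 1) = ((M : ℚ) + 1) * (M.choose i : ℚ) := by
          have h := (Nat.add_one_mul_choose_eq M i).symm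
          have h2 : (((M + 1).choose (i + 1) * (i + 1) : ℕ) : ℚ) = (((M + 1) * M.choose i : ℕ) : ℚ) := by
            exact_mod_cast congrArg (fun x : ℕ => (x : ℚ)) h
          push_cast at h2
          linarith [h2]
        have hb : ((i : ℚ) + 1) ^ j' = ∑ p ∈ range (j' + 1), (i : ℚ) ^ p * 1 ^ (j' - p) * (j'.choose p : ℚ) :=
          add_pow (i : ℚ) 1 j'
        push_cast
        rw [pow_succ ((i : ℚ) + 1) j', show (-1 : ℚ) ^ (i + 1) = (-1) * (-1 : ℚ) ^ i from by ring]
        calc (-1 : ℚ) * (-1 : ℚ) ^ i * ((M + 1).choose (i + 1) : ℚ) * (((i : ℚ) + 1) ^ j' * ((i : ℚ) + 1))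
            = (-1 : ℚ) * (-1 : ℚ) ^ i * ((((M + 1).choose (i + 1) : ℚ)) * ((i : ℚ) + 1)) * ((i : ℚ) + 1) ^ j' := by ring
          _ = (-1 : ℚ) * (-1 : ℚ) ^ i * (((M : ℚ) + 1) * (M.choose i : ℚ)) *
                (∑ p ∈ range (j' + 1), (i : ℚ) ^ p * 1 ^ (j' - p) * (j'.choose p : ℚ)) := by rw [hc, hb]
          _ = ∑ p ∈ range (j' + 1),
                (-((M : ℚ) + 1) * (j'.choose p : ℚ)) * ((-1 : ℚ) ^ i * (M.choose i : ℚ) * (i : ℚ) ^ p) := by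
              rw [Finset.mul_sum]
              exact Finset.sum_congr rfl fun p _ => by ring
      rw [Finset.sum_congr rfl step, Finset.sum_comm]
      refine Finset.sum_eq_zero fun p hp => ?_
      have hp' : p < j' + 1 := Finset.mem_range.mp hp
      rw [← Finset.mul_sum]
      obtain ⟨M', rfl⟩ : ∃ M', M = M' + 1 := ⟨M - 1, by omega⟩
      rw [IH p (by omega) (M' + 1) (by omega), mul_zero]


/-- For all `l, n` with `l ≤ n`, `C(l, n+1) = -2 * C(l, n)`. -/
theorem stmt_5 (l n : ℕ) (hln : l ≤ n) : C l (n + 1) = -2 * C l n := by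
  have hT : ∀ k : ℕ, l < k →
      ∑ t ∈ Finset.range (k + 2), (-1 : ℚ) ^ t * (Nat.choose (k + 1) t : ℚ) * (t : ℚ) ^ (l + 1) = 0 := by
    intro k hk
    have h := alt_sum_zero (l + 1) (k + 1) (by omega)
    simpa using h
  unfold C
  rw [show n + 1 - l = (n - l) + 1 from by omega, pow_succ]
  rw [Finset.sum_Icc_succ_top (by omega : 1 ≤ n + 1)]
  rw [hT (n + 1) (by omega), mul_zero, add_zero]
  have hsum : ∑ k ∈ Finset.Icc 1 n,
      (((2 : ℚ) ^ (n + 1) - (2 : ℚ) ^ (n + 1 - k)) / (k + 1)) *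
        ∑ t ∈ Finset.range (k + 2), (-1 : ℚ) ^ t * (Nat.choose (k + 1) t : ℚ) * (t : ℚ) ^ (l + 1)
      = 2 * ∑ k ∈ Finset.Icc 1 n,
      (((2 : ℚ) ^ n - (2 : ℚ) ^ (n - k)) / (k + 1)) *
        ∑ t ∈ Finset.range (k + 2), (-1 : ℚ) ^ t * (Nat.choose (k + 1) t : ℚ) * (t : ℚ) ^ (l + 1) := by
    rw [Finset.mul_sum]
    refine Finset.sum_congr rfl fun k hk => ?_
    obtain ⟨hk1, hk2⟩ := Finset.mem_Icc.mp hk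
    by_cases hkl : l < k
    · rw [hT k hkl, mul_zero, mul_zero, mul_zero]
    · rw [show n + 1 - k = (n - k) + 1 from by omega, pow_succ, pow_succ]
      ring
  rw [hsum]
  ring
end

section
/- For every natural number n ≥ 1, S(n,n) = C(n,n). -/
open Finset fwdDiff

theorem fwdDiff_iter_apply_add {M G : Type*} [AddCommMonoid M] [AddCommGroup G] (h : M)
    (f : M → G) (k : ℕ) (x : M) :
    Δ_[h] ^[k] f (x + h) = Δ_[h] ^[k] f x + Δ_[h] ^[k + 1] f x := by
  rw [Function.iterate_succ_apply', fwdDiff]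
  abel

section CommRing

variable {R : Type*} [CommRing R]

theorem sum_neg_one_pow_mul_choose_mul_eq_fwdDiff_iter (g : R → R) (k : ℕ) (y : R) :
    ∑ t ∈ range (k + 1), (-1) ^ t * (k.choose t : R) * g (y + t) =
      (-1) ^ k * Δ_[1] ^[k] g y := by
  rw [fwdDiff_iter_eq_sum_shift, mul_sum]
  refine sum_congr rfl fun t ht ↦ ?_
  have htk : (-1 : R) ^ k = (-1) ^ (k - t) * (-1) ^ t := by
    rw [← pow_add, Nat.sub_add_cancel (Nat.lt_succ_iff.mp (mem_range.mp ht))]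
  have hsq : (-1 : R) ^ (k - t) * (-1) ^ (k - t) = 1 := by
    rw [← mul_pow, neg_one_mul, neg_neg, one_pow]
  rw [htk, zsmul_eq_mul, nsmul_one]
  push_cast
  linear_combination -(-1 : R) ^ t * k.choose t * g (y + t) * hsq

theorem sum_neg_one_pow_mul_choose_succ_mul_self_mul (g : R → R) (k : ℕ) :
    ∑ t ∈ range (k + 2), (-1) ^ t * ((k + 1).choose t : R) * (t * g t) =
      -(k + 1) * ((-1) ^ k * Δ_[1] ^[k] g 1) := by
  rw [← sum_neg_one_pow_mul_choose_mul_eq_fwdDiff_iter, sum_range_succ', mul_sum]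
  simp only [Nat.cast_zero, zero_mul, mul_zero, add_zero]
  refine sum_congr rfl fun s _ ↦ ?_
  have h := congrArg (Nat.cast (R := R)) (Nat.add_one_mul_choose_eq k s)
  push_cast at h ⊢
  rw [add_comm 1 (s : R)]
  linear_combination ((-1 : R) ^ s * g (s + 1)) * h

theorem fwdDiff_iter_comp_sub (g : R → R) (c : R) (m : ℕ) (x : R) :
    Δ_[1] ^[m] (fun y ↦ g (c - y)) x = (-1) ^ m * Δ_[1] ^[m] g (c - m - x) := by
  induction m generalizing x with
  | zero => simp
  | succ m ih =>
    rw [Function.iterate_succ_apply', Function.iterate_succ_apply', fwdDiff, fwdDiff, ih, ih]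
    push_cast
    ring_nf

theorem sum_range_neg_one_pow_mul_eq_sub {q f : R → R} (hq : ∀ x, q x + q (x + 1) = f x)
    (N : ℕ) : ∑ p ∈ range N, (-1) ^ p * f p = q 0 - (-1) ^ N * q N := by
  have hterm (p : ℕ) : (-1) ^ p * f p = (-1) ^ p * q p - (-1) ^ (p + 1) * q ↑(p + 1) := by
    rw [← hq]
    push_cast
    ring
  simp only [hterm, sum_range_sub', pow_zero, Nat.cast_zero, one_mul]

end CommRing

theorem sum_range_sum_range_choose_sub_mul {R : Type*} [CommSemiring R] (b : ℕ → R) (n : ℕ) :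
    ∑ i ∈ range (n + 1), ∑ p ∈ range (i + 1), ((n + 1).choose (i - p) : R) * b p =
      ∑ j ∈ range (n + 2), ((n + 1).choose j : R) * ∑ p ∈ range j, b p := by
  have hreflect (i : ℕ) : ∑ p ∈ range (i + 1), ((n + 1).choose (i - p) : R) * b p =
      ∑ p ∈ range (i + 1), ((n + 1).choose p : R) * b (i - p) := by
    rw [← sum_range_reflect]
    refine sum_congr rfl fun p hp ↦ ?_
    rw [Nat.add_sub_cancel, Nat.sub_sub_self (Nat.lt_succ_iff.mp (mem_range.mp hp))]
  simp only [hreflect, sum_range_diag_flip (n + 1) fun j p ↦ ((n + 1).choose j : R) * b p,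
    ← mul_sum]
  rw [sum_range_succ' _ (n + 1), range_zero, sum_empty, mul_zero, add_zero, ← sum_range_reflect]
  refine sum_congr rfl fun j hj ↦ ?_
  have hjn := Nat.lt_succ_iff.mp (mem_range.mp hj)
  rw [Nat.add_sub_cancel, show n + 1 - (n - j) = j + 1 by omega,
    ← Nat.choose_symm_of_eq_add (show n + 1 = j + 1 + (n - j) by omega)]

section Field

variable {K : Type*} [Field K]

theorem sum_range_one_sub_inv_two_pow_mul_sub [NeZero (2 : K)] {a : ℕ → K} {N : ℕ}
    (ha0 : a 0 = 0) (haN : a N = 0) :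
    ∑ k ∈ range N, (1 - 2⁻¹ ^ k) * (a (k + 1) - a k) = -∑ k ∈ range N, 2⁻¹ ^ k * a k := by
  have hterm (k : ℕ) : (1 - 2⁻¹ ^ k) * (a (k + 1) - a k) =
      ((1 - 2 * 2⁻¹ ^ (k + 1)) * a (k + 1) - (1 - 2 * 2⁻¹ ^ k) * a k) - 2⁻¹ ^ k * a k := by
    rw [pow_succ, mul_left_comm, mul_inv_cancel₀ two_ne_zero]
    ring
  rw [sum_congr rfl fun k _ ↦ hterm k, sum_sub_distrib,
    sum_range_sub (fun k ↦ (1 - 2 * 2⁻¹ ^ k) * a k), ha0, haN]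
  ring

/-- `(1 + shift)⁻¹ f = (2 + Δ)⁻¹ f`, expanded as a Neumann series that terminates when
`Δ^[m] f = 0`. -/
def alternatingAntidiff (m : ℕ) (f : K → K) : K → K :=
  ∑ k ∈ range m, ((-1) ^ k / 2 ^ (k + 1) : K) • Δ_[1] ^[k] f

theorem alternatingAntidiff_apply (m : ℕ) (f : K → K) (x : K) :
    alternatingAntidiff m f x = ∑ k ∈ range m, (-1) ^ k / 2 ^ (k + 1) * Δ_[1] ^[k] f x := by
  simp [alternatingAntidiff]

variable {m : ℕ} {f : K → K}

theorem alternatingAntidiff_add_apply_add_one [NeZero (2 : K)] (hf : Δ_[1] ^[m] f = 0) (x : K) :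
    alternatingAntidiff m f x + alternatingAntidiff m f (x + 1) = f x := by
  have hterm (k : ℕ) : (-1) ^ k / 2 ^ (k + 1) * Δ_[1] ^[k] f x +
      (-1) ^ k / 2 ^ (k + 1) * Δ_[1] ^[k] f (x + 1) =
      (-1) ^ k / 2 ^ k * Δ_[1] ^[k] f x - (-1) ^ (k + 1) / 2 ^ (k + 1) * Δ_[1] ^[k + 1] f x := by
    rw [fwdDiff_iter_apply_add]
    field_simp
    ring
  rw [alternatingAntidiff_apply, alternatingAntidiff_apply, ← sum_add_distrib,
    sum_congr rfl fun k _ ↦ hterm k, sum_range_sub', hf]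
  simp

theorem fwdDiff_iter_alternatingAntidiff (hf : Δ_[1] ^[m] f = 0) :
    Δ_[1] ^[m] (alternatingAntidiff m f) = 0 := by
  rw [alternatingAntidiff, fwdDiff_iter_finsetSum]
  refine sum_eq_zero fun k _ ↦ ?_
  rw [fwdDiff_iter_const_smul, ← Function.iterate_add_apply, Nat.add_comm m k,
    Function.iterate_add_apply, hf]
  exact smul_eq_zero_of_right _ (Function.iterate_fixed (fwdDiff_const 1 0) k)

theorem eq_of_add_apply_add_one_eq [NeZero (2 : K)] {g g' : K → K} (hg : Δ_[1] ^[m] g = 0)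
    (hg' : Δ_[1] ^[m] g' = 0) (h : ∀ x, g x + g (x + 1) = g' x + g' (x + 1)) : g = g' := by
  set d := g + (-1 : K) • g'
  have hd : Δ_[1] d = (-2 : K) • d := by
    ext x
    simp only [d, fwdDiff, Pi.add_apply, Pi.smul_apply, smul_eq_mul]
    linear_combination h x
  have hdk (k : ℕ) : Δ_[1] ^[k] d = (-2 : K) ^ k • d := by
    induction k with
    | zero => simp
    | succ k ih =>
      rw [Function.iterate_succ_apply, hd, fwdDiff_iter_const_smul, ih, smul_smul, pow_succ']
  have hdm : Δ_[1] ^[m] d = 0 := by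
    simp only [d, fwdDiff_iter_add, fwdDiff_iter_const_smul, hg, hg', smul_zero, add_zero]
  rw [hdk, smul_eq_zero_iff_right (pow_ne_zero _ (neg_ne_zero.mpr two_ne_zero))] at hdm
  rw [← sub_eq_zero, sub_eq_add_neg, ← neg_one_smul K g']
  exact hdm

theorem alternatingAntidiff_pow_apply_zero_of_even [NeZero (2 : K)] {l : ℕ} (hl : Even l)
    (hl0 : l ≠ 0) (hlm : l < m) : alternatingAntidiff m (· ^ l) (0 : K) = 0 := by
  set q := alternatingAntidiff m (· ^ l : K → K)
  have hpow : Δ_[1] ^[m] (· ^ l : K → K) = 0 := fwdDiff_iter_pow_eq_zero_of_lt hlm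
  have hq := alternatingAntidiff_add_apply_add_one hpow
  have hΔq := fwdDiff_iter_alternatingAntidiff hpow
  have hreflect : (fun x ↦ q (1 - x)) = q := by
    refine eq_of_add_apply_add_one_eq (m := m) ?_ hΔq fun x ↦ ?_
    · ext x
      rw [fwdDiff_iter_comp_sub, hΔq, Pi.zero_apply, mul_zero, Pi.zero_apply]
    · rw [hq, show 1 - (x + 1) = -x by ring, add_comm, show 1 - x = -x + 1 by ring, hq,
        hl.neg_pow]
  have h01 : q 0 + q 1 = 0 := by rw [← zero_add 1, hq, zero_pow hl0]
  have h10 : q 1 = q 0 := by simpa using congrFun hreflect 0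
  rw [h10, ← two_mul, mul_eq_zero] at h01
  exact h01.resolve_left two_ne_zero

end Field

theorem S_eq_alternatingAntidiff {l n : ℕ} (hln : l ≤ n) :
    S l n = (-1) ^ n * (2 ^ (n + 1) * alternatingAntidiff (n + 1) (· ^ l : ℚ → ℚ) 0) := by
  have hpow : Δ_[1] ^[n + 1] (· ^ l : ℚ → ℚ) = 0 :=
    fwdDiff_iter_pow_eq_zero_of_lt (Nat.lt_succ_of_le hln)
  have hq := alternatingAntidiff_add_apply_add_one hpow
  set q := alternatingAntidiff (n + 1) (· ^ l : ℚ → ℚ)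
  have hpartial := sum_range_neg_one_pow_mul_eq_sub hq
  have hΔq : ∑ j ∈ range (n + 2), (-1) ^ j * ((n + 1).choose j : ℚ) * q (0 + j) = 0 := by
    rw [sum_neg_one_pow_mul_choose_mul_eq_fwdDiff_iter, fwdDiff_iter_alternatingAntidiff hpow,
      Pi.zero_apply, mul_zero]
  rw [S]
  congr 1
  calc ∑ i ∈ range (n + 1), ∑ p ∈ range (i + 1),
        (-1) ^ p * ((n + 1).choose (i - p) : ℚ) * (p : ℚ) ^ l
      = ∑ j ∈ range (n + 2), ((n + 1).choose j : ℚ) * ∑ p ∈ range j, (-1) ^ p * (p : ℚ) ^ l := by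
        rw [← sum_range_sum_range_choose_sub_mul]
        exact sum_congr rfl fun i _ ↦ sum_congr rfl fun p _ ↦ by ring
    _ = ∑ j ∈ range (n + 2), ((n + 1).choose j : ℚ) * (q 0 - (-1) ^ j * q j) := by
        simp only [hpartial]
    _ = 2 ^ (n + 1) * q 0 - ∑ j ∈ range (n + 2), (-1) ^ j * ((n + 1).choose j : ℚ) * q (0 + j) := by
        simp only [mul_sub, sum_sub_distrib, ← sum_mul, zero_add]
        rw [← Nat.cast_sum, Nat.sum_range_choose]
        push_cast
        exact congrArg _ (sum_congr rfl fun j _ ↦ by ring)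
    _ = 2 ^ (n + 1) * q 0 := by rw [hΔq, sub_zero]

theorem C_eq_alternatingAntidiff {l n : ℕ} (hl : l ≠ 0) (hln : l ≤ n) :
    C l n = (-1) ^ (n - l) * -(2 ^ (n + 1) * alternatingAntidiff (n + 1) (· ^ l : ℚ → ℚ) 0) := by
  set a : ℕ → ℚ := fun k ↦ (-1) ^ k * Δ_[1] ^[k] (· ^ l : ℚ → ℚ) 0
  have hdiff (k : ℕ) : ∑ t ∈ range (k + 2), (-1) ^ t * ((k + 1).choose t : ℚ) * (t : ℚ) ^ (l + 1) =
      (k + 1) * (a (k + 1) - a k) := by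
    have h := sum_neg_one_pow_mul_choose_succ_mul_self_mul (· ^ l : ℚ → ℚ) k
    simp only [← pow_succ'] at h
    have h1 := fwdDiff_iter_apply_add (1 : ℚ) (· ^ l) k 0
    rw [zero_add] at h1
    rw [h, h1]
    simp only [a, pow_succ]
    ring
  have ha0 : a 0 = 0 := by simp [a, zero_pow hl]
  have haN : a (n + 1) = 0 := by
    simp [a, fwdDiff_iter_pow_eq_zero_of_lt (Nat.lt_succ_of_le hln)]
  rw [C]
  congr 1
  calc ∑ k ∈ Icc 1 n, (2 ^ n - 2 ^ (n - k)) / (k + 1 : ℚ) *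
        ∑ t ∈ range (k + 2), (-1) ^ t * ((k + 1).choose t : ℚ) * (t : ℚ) ^ (l + 1)
      = ∑ k ∈ Icc 1 n, 2 ^ n * ((1 - 2⁻¹ ^ k) * (a (k + 1) - a k)) := by
        refine sum_congr rfl fun k hk ↦ ?_
        rw [hdiff, pow_sub₀ 2 two_ne_zero (mem_Icc.mp hk).2, inv_pow]
        field_simp
    _ = 2 ^ n * ∑ k ∈ range (n + 1), (1 - 2⁻¹ ^ k) * (a (k + 1) - a k) := by
        rw [← mul_sum, range_eq_Ico, sum_eq_sum_Ico_succ_bot (Nat.succ_pos n)]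
        simp [Ico_add_one_right_eq_Icc]
    _ = -(2 ^ (n + 1) * alternatingAntidiff (n + 1) (· ^ l : ℚ → ℚ) 0) := by
        rw [sum_range_one_sub_inv_two_pow_mul_sub ha0 haN, alternatingAntidiff_apply, mul_neg,
          neg_inj, mul_sum, mul_sum]
        refine sum_congr rfl fun k _ ↦ ?_
        simp only [a, inv_pow]
        field_simp
        ring

/-- For every natural number `n ≥ 1`, `S(n,n) = C(n,n)`. -/
theorem stmt_6 (n : ℕ) (hn : 1 ≤ n) : S n n = C n n := by
  have hn0 : n ≠ 0 := Nat.one_le_iff_ne_zero.mp hn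
  rw [S_eq_alternatingAntidiff le_rfl, C_eq_alternatingAntidiff hn0 le_rfl, Nat.sub_self, pow_zero,
    one_mul]
  rcases Nat.even_or_odd n with heven | hodd
  · rw [alternatingAntidiff_pow_apply_zero_of_even heven hn0 n.lt_succ_self]
    simp
  · rw [hodd.neg_one_pow, neg_one_mul]
end

section
/- For every natural number n ≥ 1, C(n,n) = (−1)^{n+1} · S(n,n). -/
open Finset

theorem sum_range_neg_one_pow_mul_choose_mul_pow_eq_zero {R : Type*} [CommRing R] {k m : ℕ}
    (h : k < m) : ∑ t ∈ range (m + 1), (-1 : R) ^ t * m.choose t * (t : R) ^ k = 0 := by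
  have hΔ := congrFun (fwdDiff_iter_pow_eq_zero_of_lt (R := R) h) 0
  rw [fwdDiff_iter_eq_sum_shift] at hΔ
  calc _ = (-1) ^ m * ∑ t ∈ range (m + 1),
          ((-1 : ℤ) ^ (m - t) * m.choose t) • ((0 : R) + t • 1) ^ k := by
        rw [mul_sum]
        refine sum_congr rfl fun t ht => ?_
        obtain ⟨d, rfl⟩ := Nat.exists_eq_add_of_le (Nat.le_of_lt_succ (mem_range.1 ht))
        have hd : (-1 : R) ^ d * (-1) ^ d = 1 := by rw [← mul_pow]; simp
        simp only [Nat.add_sub_cancel_left, zero_add, nsmul_one, zsmul_eq_mul, Int.cast_mul,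
          Int.cast_pow, Int.cast_neg, Int.cast_one, Int.cast_natCast, pow_add]
        linear_combination (-(-1 : R) ^ t * (t + d).choose t * (t : R) ^ k) * hd
    _ = 0 := by rw [hΔ, Pi.zero_apply, mul_zero]

namespace Nat

theorem sum_range_choose_eq_choose_succ (n s : ℕ) :
    ∑ k ∈ range (n + 1), k.choose s = (n + 1).choose (s + 1) := by
  induction n with
  | zero =>
    rcases s with _ | s
    · simp
    · simp [choose_eq_zero_of_lt (by omega : 1 < s + 2)]
  | succ n ih => rw [sum_range_succ, ih, Nat.choose_succ_succ' (n + 1), add_comm]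

theorem sum_range_succ_choose_succ (N m : ℕ) :
    ∑ j ∈ range (m + 1), (N + 1).choose j = 2 * ∑ j ∈ range m, N.choose j + N.choose m := by
  induction m with
  | zero => simp
  | succ m ih => rw [sum_range_succ, ih, sum_range_succ, Nat.choose_succ_succ']; ring

/-- By symmetry the right side is `∑_{j > s} (n+1).choose j`: both sides count the subsets of
`{0, …, n}` with more than `s` elements, the left one by the position `k` of the `(s+1)`-st. -/
theorem sum_range_choose_mul_two_pow (n s : ℕ) :
    ∑ k ∈ range (n + 1), k.choose s * 2 ^ (n - k)
      = (n + 1).choose (s + 1) + ∑ j ∈ range (n - s), (n + 1).choose j := by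
  induction n with
  | zero =>
    rcases s with _ | s
    · simp
    · simp [choose_eq_zero_of_lt (by omega : 1 < s + 2)]
  | succ n ih =>
    have hstep : ∑ k ∈ range (n + 2), k.choose s * 2 ^ (n + 1 - k)
        = 2 * ∑ k ∈ range (n + 1), k.choose s * 2 ^ (n - k) + (n + 1).choose s := by
      rw [sum_range_succ, Nat.sub_self, pow_zero, mul_one, mul_sum]
      congr 1
      refine sum_congr rfl fun k hk => ?_
      rw [Nat.sub_add_comm (Nat.le_of_lt_succ (mem_range.1 hk)), pow_succ]
      ring
    rw [hstep, ih, Nat.choose_succ_succ' (n + 1)]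
    rcases le_or_gt s n with hsn | hns
    · rw [Nat.sub_add_comm hsn, sum_range_succ_choose_succ,
        ← Nat.choose_symm_of_eq_add (by omega : n + 1 = (s + 1) + (n - s))]
      ring
    · rw [Nat.sub_eq_zero_of_le hns, Nat.sub_eq_zero_of_le hns.le,
        Nat.choose_eq_zero_of_lt (by omega : n + 1 < s + 1)]
      simp

end Nat

theorem sum_range_neg_one_pow_mul_choose_succ_mul_pow_succ {R : Type*} [CommRing R] (m l : ℕ) :
    ∑ t ∈ range (m + 2), (-1 : R) ^ t * (m + 1).choose t * (t : R) ^ (l + 1)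
      = -(m + 1) * ∑ s ∈ range (m + 1), (-1 : R) ^ s * m.choose s * ((s : R) + 1) ^ l := by
  rw [sum_range_succ', mul_sum]
  simp only [Nat.cast_zero, zero_pow (Nat.succ_ne_zero l), mul_zero, add_zero]
  refine sum_congr rfl fun s _ => ?_
  have habs := congrArg (Nat.cast (R := R)) (Nat.add_one_mul_choose_eq m s)
  push_cast at habs ⊢
  linear_combination -(-1 : R) ^ (s + 1) * ((s : R) + 1) ^ l * habs

theorem sum_Icc_two_pow_sub_two_pow_mul_choose {R : Type*} [CommRing R] (n s : ℕ) :
    ∑ k ∈ Icc 1 n, ((2 : R) ^ n - 2 ^ (n - k)) * k.choose s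
      = (2 ^ n - 1) * (n + 1).choose (s + 1) - ∑ j ∈ range (n - s), ((n + 1).choose j : R) := by
  have hrange : ∑ k ∈ Icc 1 n, ((2 : R) ^ n - 2 ^ (n - k)) * k.choose s
      = ∑ k ∈ range (n + 1), ((2 : R) ^ n - 2 ^ (n - k)) * k.choose s := by
    refine sum_subset (fun k hk => mem_range.2 (by have := mem_Icc.1 hk; omega)) fun k hk hk' => ?_
    obtain rfl : k = 0 := by simp only [mem_range, mem_Icc] at hk hk'; omega
    simp
  have hhockey := congrArg (Nat.cast (R := R)) (Nat.sum_range_choose_eq_choose_succ n s)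
  have hweighted := congrArg (Nat.cast (R := R)) (Nat.sum_range_choose_mul_two_pow n s)
  push_cast at hhockey hweighted
  calc _ = 2 ^ n * ∑ k ∈ range (n + 1), (k.choose s : R)
        - ∑ k ∈ range (n + 1), (k.choose s : R) * 2 ^ (n - k) := by
        rw [hrange, mul_sum, ← sum_sub_distrib]
        exact sum_congr rfl fun k _ => by ring
    _ = _ := by rw [hhockey, hweighted]; ring

theorem S_eq_sum_pow_mul_sum_choose (l n : ℕ) :
    S l n = (-1) ^ n * ∑ p ∈ range (n + 1),
      (-1) ^ p * (p : ℚ) ^ l * ∑ j ∈ range (n + 1 - p), ((n + 1).choose j : ℚ) := by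
  unfold S
  congr 1
  rw [sum_comm' (t' := range (n + 1)) (s' := fun p => Ico p (n + 1))
    (fun i p => by simp only [mem_range, mem_Ico]; omega)]
  refine sum_congr rfl fun p _ => ?_
  rw [sum_Ico_eq_sum_range, mul_sum]
  simp only [Nat.add_sub_cancel_left]
  exact sum_congr rfl fun j _ => by ring

theorem C_eq_sum_pow_mul_sum_choose (l n : ℕ) :
    C l n = (-1) ^ (n - l) * ∑ s ∈ range (n + 1), (-1) ^ (s + 1) * ((s : ℚ) + 1) ^ l *
      ((2 ^ n - 1) * (n + 1).choose (s + 1) - ∑ j ∈ range (n - s), ((n + 1).choose j : ℚ)) := by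
  unfold C
  congr 1
  have hterm : ∀ k ∈ Icc 1 n, ((2 : ℚ) ^ n - 2 ^ (n - k)) / (k + 1) *
        ∑ t ∈ range (k + 2), (-1) ^ t * ((k + 1).choose t : ℚ) * (t : ℚ) ^ (l + 1)
      = ∑ s ∈ range (n + 1),
          (-1) ^ (s + 1) * ((s : ℚ) + 1) ^ l * (((2 : ℚ) ^ n - 2 ^ (n - k)) * k.choose s) := by
    intro k hk
    have hkn : k + 1 ≤ n + 1 := by have := mem_Icc.1 hk; omega
    rw [sum_range_neg_one_pow_mul_choose_succ_mul_pow_succ, mul_sum,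
      sum_subset (range_subset_range.2 hkn) fun s _ hs => by
        rw [Nat.choose_eq_zero_of_lt (by simpa using hs)]; simp, mul_sum]
    refine sum_congr rfl fun s _ => ?_
    field_simp
    ring
  rw [sum_congr rfl hterm, sum_comm]
  refine sum_congr rfl fun s _ => ?_
  rw [← mul_sum, sum_Icc_two_pow_sub_two_pow_mul_choose]

/-- For every natural number `n ≥ 1`, `C(n,n) = (-1)^(n+1) * S(n,n)`. -/
theorem stmt_7 (n : ℕ) (hn : 1 ≤ n) : C n n = (-1 : ℚ) ^ (n + 1) * S n n := by
  have hpow : (0 : ℚ) ^ n = 0 := zero_pow (by omega)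
  set a : ℕ → ℚ := fun s => (-1) ^ (s + 1) * ((s : ℚ) + 1) ^ n
  set T : ℕ → ℚ := fun q => ∑ j ∈ range (n + 1 - q), ((n + 1).choose j : ℚ)
  have hvanish : ∑ s ∈ range (n + 1), a s * (n + 1).choose (s + 1) = 0 := by
    have h := sum_range_neg_one_pow_mul_choose_mul_pow_eq_zero (R := ℚ) (Nat.lt_succ_self n)
    rw [sum_range_succ'] at h
    simpa [a, hpow, mul_right_comm] using h
  have hS : S n n = (-1) ^ n * ∑ s ∈ range (n + 1), a s * T (s + 1) := by
    rw [S_eq_sum_pow_mul_sum_choose, sum_range_succ', sum_range_succ]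
    simp [a, T, hpow]
  have hC : C n n = (2 ^ n - 1) * ∑ s ∈ range (n + 1), a s * (n + 1).choose (s + 1)
      - ∑ s ∈ range (n + 1), a s * T (s + 1) := by
    rw [C_eq_sum_pow_mul_sum_choose, Nat.sub_self, pow_zero, one_mul, mul_sum, ← sum_sub_distrib]
    exact sum_congr rfl fun s _ => by simp only [a, T, Nat.add_sub_add_right]; ring
  rw [hC, hS, hvanish, ← mul_assoc, ← pow_add, Odd.neg_one_pow ⟨n, by ring⟩]
  ring
end

section
/- For every even natural number n ≥ 2, S(n,n) = 0. -/
open Finset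

section
variable {R : Type*} [CommRing R]

lemma neg_one_pow_mul_neg_one_pow_sub {k m : ℕ} (h : k ≤ m) :
    (-1 : R) ^ m * (-1) ^ (m - k) = (-1) ^ k := by
  rw [← pow_add, show m + (m - k) = k + 2 * (m - k) by lia, pow_add, pow_mul]
  simp

theorem alternating_sum_choose_mul_sub_pow_eq_zero {j m : ℕ} (h : j < m) (c : R) :
    ∑ k ∈ range (m + 1), (-1) ^ k * (m.choose k : R) * ((k : R) - c) ^ j = 0 := by
  have hΔ := congr_fun (fwdDiff_iter_pow_eq_zero_of_lt (R := R) h) (-c)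
  rw [fwdDiff_iter_eq_sum_shift] at hΔ
  calc ∑ k ∈ range (m + 1), (-1) ^ k * (m.choose k : R) * ((k : R) - c) ^ j
      = (-1) ^ m * ∑ k ∈ range (m + 1),
          ((-1 : ℤ) ^ (m - k) * m.choose k) • (-c + k • (1 : R)) ^ j := by
        rw [mul_sum]
        refine sum_congr rfl fun k hk => ?_
        rw [zsmul_eq_mul, nsmul_one, ← neg_one_pow_mul_neg_one_pow_sub (mem_range_succ_iff.mp hk)]
        push_cast
        ring
    _ = 0 := by rw [hΔ, Pi.zero_apply, mul_zero]

variable (R) in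
def choosePowConv (n i : ℕ) : R :=
  ∑ p ∈ range (i + 1), (-1) ^ p * ((n + 1).choose (i - p) : R) * (p : R) ^ n

lemma choosePowConv_eq_neg_one_pow_mul_sum {n : ℕ} (hn : Even n) (i : ℕ) :
    choosePowConv R n i =
      (-1) ^ i * ∑ j ∈ range (i + 1), (-1) ^ j * ((n + 1).choose j : R) * ((j : R) - i) ^ n := by
  rw [mul_sum, ← sum_range_reflect]
  refine sum_congr rfl fun p hp => ?_
  have hp : p ≤ i := mem_range_succ_iff.mp hp
  rw [Nat.add_sub_cancel, Nat.cast_sub hp, sub_sub_cancel_left, hn.neg_pow, ← mul_assoc,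
    ← mul_assoc, neg_one_pow_mul_neg_one_pow_sub hp]

lemma choosePowConv_reflect_eq_neg_one_pow_mul_sum {n i : ℕ} (hi : i ≤ n + 1) :
    choosePowConv R n (n + 1 - i) =
      (-1) ^ i * ∑ j ∈ Ico i (n + 2), (-1) ^ j * ((n + 1).choose j : R) * ((j : R) - i) ^ n := by
  rw [mul_sum, sum_Ico_eq_sum_range, show n + 2 - i = n + 1 - i + 1 by lia]
  refine sum_congr rfl fun p hp => ?_
  have hp : i + p ≤ n + 1 := by have := mem_range.mp hp; lia
  rw [show n + 1 - i - p = n + 1 - (i + p) by lia, Nat.choose_symm hp, Nat.cast_add,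
    add_sub_cancel_left, ← mul_assoc, ← mul_assoc, ← pow_add, ← add_assoc, pow_add _ (i + i),
    Even.neg_one_pow ⟨i, rfl⟩, one_mul]

lemma choosePowConv_add_choosePowConv_reflect {n i : ℕ} (hn : Even n) (hn0 : n ≠ 0)
    (hi : i ≤ n + 1) : choosePowConv R n i + choosePowConv R n (n + 1 - i) = 0 := by
  set h : ℕ → R := fun j => (-1) ^ j * ((n + 1).choose j : R) * ((j : R) - i) ^ n
  have hsplit : ∑ j ∈ range (i + 1), h j + ∑ j ∈ Ico i (n + 2), h j
      = ∑ j ∈ range (n + 2), h j + h i := by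
    rw [sum_eq_sum_Ico_succ_bot (by lia : i < n + 2) h,
      ← sum_range_add_sum_Ico h (by lia : i + 1 ≤ n + 2)]
    ring
  have hfull : ∑ j ∈ range (n + 2), h j = 0 :=
    alternating_sum_choose_mul_sub_pow_eq_zero (Nat.lt_succ_self n) _
  have hi0 : h i = 0 := by simp [h, hn0]
  rw [choosePowConv_eq_neg_one_pow_mul_sum hn, choosePowConv_reflect_eq_neg_one_pow_mul_sum hi,
    ← mul_add, hsplit, hfull, hi0, add_zero, mul_zero]

theorem sum_range_choosePowConv_eq_zero {n : ℕ} (hn : Even n) (hn0 : n ≠ 0) :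
    ∑ i ∈ range (n + 1), choosePowConv R n i = 0 := by
  have hpair : ∑ i ∈ range (n + 2), choosePowConv R n i = 0 := by
    refine sum_involution (fun i _ => n + 1 - i)
      (fun i hi => choosePowConv_add_choosePowConv_reflect hn hn0 (mem_range_succ_iff.mp hi))
      (fun i _ _ => ?_) (fun i hi => ?_) (fun i hi => ?_)
    · obtain ⟨k, rfl⟩ := hn; lia
    · exact mem_range.mpr (by lia)
    · have := mem_range_succ_iff.mp hi; lia
  have hzero : choosePowConv R n 0 = 0 := by simp [choosePowConv, hn0]
  have htop : choosePowConv R n (n + 1) = 0 := by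
    simpa [hzero] using choosePowConv_add_choosePowConv_reflect (R := R) hn hn0 (Nat.zero_le _)
  rwa [sum_range_succ, htop, add_zero] at hpair
end

/-- For every even natural number `n ≥ 2`, `S(n,n) = 0`. -/
theorem stmt_8 (n : ℕ) (hn : 2 ≤ n) (heven : Even n) : S n n = 0 := by
  show (-1) ^ n * ∑ i ∈ range (n + 1), choosePowConv ℚ n i = 0
  rw [sum_range_choosePowConv_eq_zero heven (by lia), mul_zero]
end

section
/- For all natural numbers l and n with 1 ≤ l ≤ n, S(l,n) = C(l,n). -/
/-!
Let `Δ` be the forward difference and `E := ∑_{k ≤ n} (-Δ/2)^k xˡ`, the Euler polynomial `E_l`.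
Since `Δ^{n+1} xˡ = 0`, the series inverts `f ↦ (f(x+1) + f(x))/2`, i.e. `E(x+1) + E(x) = 2xˡ`.
This telescopes the alternating partial sums `∑_{p<q} (-1)^p pˡ = (E(0) - (-1)^q E(q))/2`, and the
sums over `i` in `S` are binomial convolutions of them which `Δ^{n+1} E = 0` collapses to
`S(l,n) = (-1)^n 2^n E(0)`. In `C`, the inner sum is `(-1)^{k+1} Δ^{k+1}(x^{l+1})(0)`, which the
discrete Leibniz rule turns into `(-1)^{k+1} (k+1) Δ^k(xˡ)(1)`; the weights `2^n - 2^{n-k}` then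
give `C(l,n) = (-1)^{n-l} 2^n E(1)`. Finally `x ↦ (-1)^l E(1-x)` solves the same functional
equation, and solutions killed by `Δ^{n+1}` are unique, so `E(1) = (-1)^l E(0)`.
-/

open Finset
open scoped fwdDiff

theorem fwdDiff_iter_succ_apply {M G : Type*} [AddCommMonoid M] [AddCommGroup G] (h : M)
    (f : M → G) (n : ℕ) (x : M) :
    Δ_[h] ^[n + 1] f x = Δ_[h] ^[n] f (x + h) - Δ_[h] ^[n] f x := by
  rw [Function.iterate_succ_apply']
  rfl

theorem fwdDiff_iter_comp_sub_s9 {M G : Type*} [AddCommGroup M] [AddCommGroup G] (h : M)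
    (f : M → G) (c : M) (n : ℕ) (x : M) :
    Δ_[h] ^[n] (fun y ↦ f (c - y)) x = (-1 : ℤ) ^ n • Δ_[h] ^[n] f (c - x - n • h) := by
  induction n generalizing x with
  | zero => simp
  | succ n ih =>
    rw [fwdDiff_iter_succ_apply, ih, ih, fwdDiff_iter_succ_apply, succ_nsmul,
      show c - x - (n • h + h) + h = c - x - n • h by abel,
      show c - (x + h) - n • h = c - x - (n • h + h) by abel, pow_succ]
    module

theorem sum_range_sum_range_choose_sub_mul_s9 {R : Type*} [CommSemiring R] (N : ℕ) (a : ℕ → R) :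
    ∑ m ∈ range N, ∑ k ∈ range (m + 1), (N.choose (m - k) : R) * a k =
      ∑ q ∈ range (N + 1), (N.choose q : R) * ∑ k ∈ range q, a k := by
  simp_rw [mul_sum]
  rw [sum_sigma', sum_sigma']
  refine sum_nbij' (fun x ↦ ⟨N - x.1 + x.2, x.2⟩) (fun x ↦ ⟨N - x.1 + x.2, x.2⟩) ?_ ?_ ?_ ?_ ?_
  all_goals simp only [mem_sigma, mem_range, Sigma.forall, Sigma.mk.injEq, heq_eq_eq, and_true]
  any_goals intro i k h; omega
  intro m k h
  rw [show N - m + k = N - (m - k) by omega, Nat.choose_symm (by omega)]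

section CommRing

variable {R : Type*} [CommRing R]

theorem fwdDiff_iter_succ_id_mul (g : R → R) (k : ℕ) (y : R) :
    Δ_[1] ^[k + 1] (fun x ↦ x * g x) y =
      y * Δ_[1] ^[k + 1] g y + (k + 1) * Δ_[1] ^[k] g (y + 1) := by
  induction k generalizing y with
  | zero =>
    simp only [zero_add, Function.iterate_one, fwdDiff, Nat.cast_zero, Function.iterate_zero,
      id_eq, one_mul]
    ring
  | succ k ih =>
    rw [fwdDiff_iter_succ_apply, ih, ih, fwdDiff_iter_succ_apply (n := k + 1),
      fwdDiff_iter_succ_apply (n := k)]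
    push_cast
    ring

theorem alternating_sum_choose_mul_eq_fwdDiff_iter (g : R → R) (N : ℕ) :
    ∑ q ∈ range (N + 1), (-1) ^ q * (N.choose q : R) * g q = (-1) ^ N * Δ_[1] ^[N] g 0 := by
  rw [fwdDiff_iter_eq_sum_shift, mul_sum]
  refine sum_congr rfl fun q hq ↦ ?_
  have hsign : (-1 : R) ^ N * (-1) ^ (N - q) = (-1) ^ q := by
    rw [← pow_add, show N + (N - q) = q + 2 * (N - q) by have := mem_range_succ_iff.mp hq; omega,
      pow_add, pow_mul]
    simp
  simp only [zsmul_eq_mul, nsmul_eq_mul, zero_add, mul_one]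
  push_cast
  linear_combination (N.choose q * g q) * hsign.symm

theorem two_mul_sum_range_neg_one_pow_mul {f g : R → R} (hg : ∀ x, g (x + 1) + g x = 2 * f x)
    (m : ℕ) : 2 * ∑ p ∈ range m, (-1) ^ p * f p = g 0 - (-1) ^ m * g m := by
  induction m with
  | zero => simp
  | succ m ih =>
    rw [sum_range_succ, mul_add, ih, pow_succ]
    push_cast
    linear_combination -(-1) ^ m * hg m

def fwdDiffSeries (c : R) (N : ℕ) (f : R → R) : R → R :=
  ∑ k ∈ range N, c ^ k • Δ_[1] ^[k] f

theorem fwdDiffSeries_apply (c : R) (N : ℕ) (f : R → R) (x : R) :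
    fwdDiffSeries c N f x = ∑ k ∈ range N, c ^ k * Δ_[1] ^[k] f x := by
  simp [fwdDiffSeries, Finset.sum_apply]

theorem fwdDiff_iter_fwdDiffSeries_eq_zero {M : ℕ} {f : R → R} (hf : Δ_[1] ^[M] f = 0) (c : R)
    (N : ℕ) : Δ_[1] ^[M] (fwdDiffSeries c N f) = 0 := by
  rw [fwdDiffSeries, fwdDiff_iter_finsetSum]
  refine sum_eq_zero fun k _ ↦ ?_
  rw [fwdDiff_iter_const_smul, ← Function.iterate_add_apply, add_comm,
    Function.iterate_add_apply, hf, Function.iterate_fixed (by ext; simp [fwdDiff]), smul_zero]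

theorem mul_fwdDiffSeries_add_one {N : ℕ} {f : R → R} (hf : Δ_[1] ^[N] f = 0) (c x : R) :
    c * fwdDiffSeries c N f (x + 1) = (1 + c) * fwdDiffSeries c N f x - f x := by
  simp only [fwdDiffSeries_apply]
  have hshift : ∑ k ∈ range N, c ^ k * Δ_[1] ^[k] f (x + 1) =
      ∑ k ∈ range N, c ^ k * Δ_[1] ^[k] f x + ∑ k ∈ range N, c ^ k * Δ_[1] ^[k + 1] f x := by
    rw [← sum_add_distrib]
    refine sum_congr rfl fun k _ ↦ ?_
    rw [fwdDiff_iter_succ_apply]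
    ring
  have htop : c * ∑ k ∈ range N, c ^ k * Δ_[1] ^[k + 1] f x =
      ∑ k ∈ range N, c ^ k * Δ_[1] ^[k] f x - f x := by
    have h := sum_range_succ' (fun k ↦ c ^ k * Δ_[1] ^[k] f x) N
    rw [sum_range_succ, hf, Pi.zero_apply, mul_zero, add_zero] at h
    rw [h, mul_sum]
    simp only [pow_succ', mul_assoc, pow_zero, one_mul, Function.iterate_zero, id_eq,
      add_sub_cancel_right]
  rw [hshift]
  linear_combination htop

end CommRing

theorem eq_of_add_shift_eq_of_fwdDiff_iter_eq_zero {K : Type*} [Field K] [CharZero K]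
    {g₁ g₂ : K → K} {N : ℕ} (h₁ : Δ_[1] ^[N] g₁ = 0) (h₂ : Δ_[1] ^[N] g₂ = 0)
    (h : ∀ x, g₁ (x + 1) + g₁ x = g₂ (x + 1) + g₂ x) : g₁ = g₂ := by
  have hΔ : Δ_[1] (g₁ - g₂) = (-2 : K) • (g₁ - g₂) := funext fun x ↦ by
    simp only [fwdDiff, Pi.sub_apply, Pi.smul_apply, smul_eq_mul]
    linear_combination h x
  have hiter : ∀ n, Δ_[1] ^[n] (g₁ - g₂) = (-2 : K) ^ n • (g₁ - g₂) := by
    intro n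
    induction n with
    | zero => simp
    | succ n ih =>
      rw [Function.iterate_succ_apply', ih, fwdDiff_const_smul, hΔ, smul_smul, pow_succ]
  have hN : Δ_[1] ^[N] (g₁ - g₂) = 0 := by
    rw [← fwdDiff_aux.coe_fwdDiffₗ_pow, map_sub, fwdDiff_aux.coe_fwdDiffₗ_pow, h₁, h₂, sub_zero]
  rw [hiter] at hN
  exact sub_eq_zero.mp ((smul_eq_zero.mp hN).resolve_left (pow_ne_zero _ (by norm_num)))

-- The Euler polynomial `E_l`, for any `N > l`.
def euler (N l : ℕ) : ℚ → ℚ := fwdDiffSeries (-2⁻¹) N (· ^ l)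

section Euler

variable {N l : ℕ}

theorem fwdDiff_iter_euler_eq_zero (hl : l < N) : Δ_[1] ^[N] (euler N l) = 0 :=
  fwdDiff_iter_fwdDiffSeries_eq_zero (fwdDiff_iter_pow_eq_zero_of_lt hl) _ _

theorem euler_add_one_add (hl : l < N) (x : ℚ) :
    euler N l (x + 1) + euler N l x = 2 * x ^ l := by
  unfold euler
  linear_combination -2 * mul_fwdDiffSeries_add_one (fwdDiff_iter_pow_eq_zero_of_lt hl) (-2⁻¹) x

theorem euler_one_sub (hl : l < N) (x : ℚ) : euler N l (1 - x) = (-1) ^ l * euler N l x := by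
  have hsign : ((-1 : ℚ) ^ l) ^ 2 = 1 := by rw [← pow_mul, pow_mul']; simp
  have hrefl : (fun y ↦ (-1) ^ l * euler N l (1 - y)) = euler N l := by
    refine eq_of_add_shift_eq_of_fwdDiff_iter_eq_zero ?_ (fwdDiff_iter_euler_eq_zero hl) fun y ↦ ?_
    · have hfun : (fun y ↦ (-1) ^ l * euler N l (1 - y)) =
          ((-1 : ℚ) ^ l) • fun y ↦ euler N l (1 - y) := rfl
      ext y
      rw [hfun, fwdDiff_iter_const_smul, Pi.smul_apply, fwdDiff_iter_comp_sub_s9,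
        fwdDiff_iter_euler_eq_zero hl]
      simp
    · rw [show 1 - (y + 1) = -y by ring, show 1 - y = -y + 1 by ring,
        ← mul_add, add_comm, euler_add_one_add hl, euler_add_one_add hl, neg_pow]
      linear_combination 2 * y ^ l * hsign
  linear_combination (-1) ^ l * congrFun hrefl x - euler N l (1 - x) * hsign

end Euler

theorem S_eq_euler {l n : ℕ} (hln : l ≤ n) : S l n = (-1) ^ n * 2 ^ n * euler (n + 1) l 0 := by
  have hl : l < n + 1 := Nat.lt_succ_of_le hln
  have hreindex : ∑ i ∈ range (n + 1), ∑ p ∈ range (i + 1),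
      (-1) ^ p * ((n + 1).choose (i - p) : ℚ) * (p : ℚ) ^ l =
        ∑ q ∈ range (n + 2), ((n + 1).choose q : ℚ) * ∑ p ∈ range q, (-1) ^ p * (p : ℚ) ^ l := by
    rw [← sum_range_sum_range_choose_sub_mul_s9]
    exact sum_congr rfl fun i _ ↦ sum_congr rfl fun p _ ↦ by rw [mul_assoc, mul_left_comm]
  have hpartial := two_mul_sum_range_neg_one_pow_mul (f := (· ^ l)) (euler_add_one_add hl)
  have hdiff := alternating_sum_choose_mul_eq_fwdDiff_iter (euler (n + 1) l) (n + 1)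
  rw [fwdDiff_iter_euler_eq_zero hl, Pi.zero_apply, mul_zero] at hdiff
  have hchoose : ∑ q ∈ range (n + 2), ((n + 1).choose q : ℚ) = 2 ^ (n + 1) := by
    exact_mod_cast Nat.sum_range_choose (n + 1)
  have htwice : 2 * ∑ q ∈ range (n + 2),
      ((n + 1).choose q : ℚ) * ∑ p ∈ range q, (-1) ^ p * (p : ℚ) ^ l =
        2 ^ (n + 1) * euler (n + 1) l 0 := by
    simp_rw [mul_sum (s := range (n + 2)), mul_left_comm (2 : ℚ), hpartial, mul_sub,
      sum_sub_distrib, ← sum_mul, hchoose, sub_eq_self, ← hdiff]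
    exact sum_congr rfl fun q _ ↦ by rw [mul_left_comm, mul_assoc]
  rw [S, hreindex]
  linear_combination (-1) ^ n / 2 * htwice

theorem C_eq_euler {l n : ℕ} (hl : 1 ≤ l) (hln : l ≤ n) :
    C l n = (-1) ^ (n - l) * 2 ^ n * euler (n + 1) l 1 := by
  have hinner (k : ℕ) : ∑ t ∈ range (k + 2), (-1) ^ t * ((k + 1).choose t : ℚ) * (t : ℚ) ^ (l + 1) =
      -((-1) ^ k * (k + 1) * Δ_[1] ^[k] (· ^ l) (1 : ℚ)) := by
    have h := alternating_sum_choose_mul_eq_fwdDiff_iter (fun x : ℚ ↦ x * x ^ l) (k + 1)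
    rw [fwdDiff_iter_succ_id_mul] at h
    simp only [← pow_succ'] at h
    rw [h, zero_mul, zero_add, zero_add]
    ring
  have hl' : l < n + 1 := Nat.lt_succ_of_le hln
  set D : ℕ → ℚ := fun k ↦ Δ_[1] ^[k] (· ^ l) (1 : ℚ)
  have hterm (k : ℕ) : ((2 : ℚ) ^ n - 2 ^ (n - k)) / (k + 1) *
      ∑ t ∈ range (k + 2), (-1) ^ t * ((k + 1).choose t : ℚ) * (t : ℚ) ^ (l + 1) =
        (2 ^ (n - k) - 2 ^ n) * ((-1) ^ k * D k) := by
    rw [hinner]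
    field_simp
    ring
  have hrange : ∑ k ∈ Icc 1 n, ((2 : ℚ) ^ (n - k) - 2 ^ n) * ((-1) ^ k * D k) =
      ∑ k ∈ range (n + 1), ((2 : ℚ) ^ (n - k) - 2 ^ n) * ((-1) ^ k * D k) := by
    rw [Nat.range_succ_eq_Icc_zero, ← insert_Icc_add_one_left_eq_Icc n.zero_le,
      sum_insert (by simp)]
    simp
  -- `∑ (-Δ)^k` inverts the shift, so this sum is `0 ^ l`.
  have halt : ∑ k ∈ range (n + 1), (-1) ^ k * D k = 0 := by
    have h := mul_fwdDiffSeries_add_one (fwdDiff_iter_pow_eq_zero_of_lt hl') (-1 : ℚ) 0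
    rw [fwdDiffSeries_apply] at h
    simp only [zero_add, neg_mul, one_mul, add_neg_cancel, zero_mul, zero_sub, neg_inj] at h
    exact h.trans (zero_pow (by omega))
  have heuler : ∑ k ∈ range (n + 1), (2 : ℚ) ^ (n - k) * ((-1) ^ k * D k) =
      2 ^ n * euler (n + 1) l 1 := by
    rw [euler, fwdDiffSeries_apply, mul_sum]
    refine sum_congr rfl fun k hk ↦ ?_
    rw [← pow_sub_mul_pow 2 (mem_range_succ_iff.mp hk), neg_pow (2⁻¹ : ℚ), inv_pow]
    field_simp
    rfl
  rw [C, sum_congr rfl fun k _ ↦ hterm k, hrange]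
  simp_rw [sub_mul, sum_sub_distrib, ← mul_sum, halt, heuler]
  ring

/-- For all `l, n` with `1 ≤ l ≤ n`, `S(l,n) = C(l,n)`. -/
theorem stmt_9 (l n : ℕ) (hl : 1 ≤ l) (hln : l ≤ n) : S l n = C l n := by
  have hsymm := euler_one_sub (Nat.lt_succ_of_le hln) 0
  rw [sub_zero] at hsymm
  have hsign : (-1 : ℚ) ^ (n - l) * (-1) ^ l = (-1) ^ n := by
    rw [← pow_add, Nat.sub_add_cancel hln]
  rw [S_eq_euler hln, C_eq_euler hl hln, hsymm, ← hsign]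
  ring
end

section
/- Let N be a free abelian group of finite rank n and let γ₁, γ₂ be saturated subgroups of N such that the subgroup γ₁ + γ₂ has rank n (equivalently, finite index in N). Then [N : γ₁ + γ₂] = [(γ₁ ∩ γ₂)^⊥ : γ₁^⊥ + γ₂^⊥], where the orthogonal subgroups are taken inside the dual lattice M = Hom(N, ℤ). In particular the index on the right-hand side is finite. -/
/-!
Let `d = [N : γ₁ + γ₂]`. As `N` is free, the decomposition of `d • x ∈ γ₁ + γ₂` can be chosen
linearly in `x`: there is `c : N →+ N` with `c x ∈ γ₁` and `d • x - c x ∈ γ₂`. The pairing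
`(f, x) ↦ f (c x) mod d` between `(γ₁ ∩ γ₂)^⊥` and `N` then has left kernel `γ₁^⊥ + γ₂^⊥` and
right kernel `γ₁ + γ₂`; saturation of `γ₁`, `γ₂` and of `γ₁ ∩ γ₂` (through the freeness of
`N ⧸ (γ₁ ∩ γ₂)`) is what rules out larger kernels. A pairing into `ZMod d` embeds each quotient
into the `ZMod d`-valued dual of the other, and a finite abelian group has at most as many
characters as elements, so both quotients have the same order.
-/

/-- A subgroup `γ` of an abelian group is saturated if `k • x ∈ γ` implies
`k = 0` or `x ∈ γ`. -/
def IsSaturated {N : Type*} [AddCommGroup N] (γ : AddSubgroup N) : Prop :=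
  ∀ (k : ℤ) (x : N), k • x ∈ γ → k = 0 ∨ x ∈ γ

/-- The orthogonal of a subgroup `γ` of `N` inside the dual lattice `Hom(N, ℤ)`:
all homomorphisms vanishing identically on `γ`. -/
def perp {N : Type*} [AddCommGroup N] (γ : AddSubgroup N) : AddSubgroup (N →+ ℤ) where
  carrier := {f | ∀ x ∈ γ, f x = 0}
  zero_mem' := fun _ _ => rfl
  add_mem' := by intro f g hf hg x hx; simp [hf x hx, hg x hx]
  neg_mem' := by intro f hf x hx; simp [hf x hx]

theorem Nat.card_addMonoidHom_zmod_le (A : Type*) [AddCommGroup A] [Finite A] (n : ℕ) [NeZero n] :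
    Nat.card (A →+ ZMod n) ≤ Nat.card A := by
  have := Fintype.ofFinite A
  calc Nat.card (A →+ ZMod n) ≤ Nat.card (AddChar A ℂ) :=
        Nat.card_le_card_of_injective _
          (AddChar.compAddMonoidHom_injective_right _ ZMod.injective_stdAddChar)
    _ ≤ Nat.card A := by
        simpa only [Nat.card_eq_fintype_card] using AddChar.card_addChar_le A ℂ

section Pairing

variable {P Q : Type*} [AddCommGroup P] [AddCommGroup Q] {n : ℕ} [NeZero n]

theorem AddMonoidHom.finite_quotient_ker_and_card_le (B : P →+ Q →+ ZMod n)
    [Finite (Q ⧸ B.flip.ker)] :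
    Finite (P ⧸ B.ker) ∧ Nat.card (P ⧸ B.ker) ≤ Nat.card (Q ⧸ B.flip.ker) := by
  let B' : P →+ (Q ⧸ B.flip.ker →+ ZMod n) := (QuotientAddGroup.lift _ B.flip le_rfl).flip
  have hker : B'.ker = B.ker := by
    ext p
    simp only [AddMonoidHom.mem_ker, AddMonoidHom.ext_iff, QuotientAddGroup.forall_mk]
    rfl
  have : Finite (Q ⧸ B.flip.ker →+ ZMod n) := Finite.of_injective _ DFunLike.coe_injective
  let e : P ⧸ B.ker ≃ B'.range :=
    ((QuotientAddGroup.quotientAddEquivOfEq hker).symm.trans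
      (QuotientAddGroup.quotientKerEquivRange B')).toEquiv
  refine ⟨.of_equiv _ e.symm, ?_⟩
  calc Nat.card (P ⧸ B.ker) = Nat.card B'.range := Nat.card_congr e
    _ ≤ Nat.card (Q ⧸ B.flip.ker →+ ZMod n) := Finite.card_subtype_le _
    _ ≤ Nat.card (Q ⧸ B.flip.ker) := Nat.card_addMonoidHom_zmod_le _ n

theorem AddMonoidHom.index_ker_eq_index_ker_flip (B : P →+ Q →+ ZMod n)
    [B.flip.ker.FiniteIndex] : B.ker.index = B.flip.ker.index := by
  obtain ⟨hfin, hle⟩ := B.finite_quotient_ker_and_card_le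
  have : Finite (P ⧸ B.flip.flip.ker) := hfin
  obtain ⟨-, hge⟩ := B.flip.finite_quotient_ker_and_card_le
  rw [AddSubgroup.index_eq_card, AddSubgroup.index_eq_card]
  exact le_antisymm hle hge

end Pairing

theorem Submodule.exists_linearMap_mem_and_sub_mem {R M V : Type*} [Ring R] [AddCommGroup M]
    [Module R M] [Module.Projective R M] [AddCommGroup V] [Module R V] {A B : Submodule R V}
    (φ : M →ₗ[R] V) (hφ : ∀ x, φ x ∈ A ⊔ B) : ∃ c : M →ₗ[R] V, ∀ x, c x ∈ A ∧ φ x - c x ∈ B := by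
  let s : (A × B) →ₗ[R] ↥(A ⊔ B) :=
    (Submodule.inclusion le_sup_left).coprod (Submodule.inclusion le_sup_right)
  have hs : Function.Surjective s := by
    rintro ⟨v, hv⟩
    obtain ⟨a, ha, b, hb, rfl⟩ := Submodule.mem_sup.mp hv
    exact ⟨(⟨a, ha⟩, ⟨b, hb⟩), rfl⟩
  obtain ⟨h, hh⟩ := Module.projective_lifting_property s (φ.codRestrict _ hφ) hs
  refine ⟨A.subtype ∘ₗ LinearMap.fst R A B ∘ₗ h, fun x => ⟨(h x).1.2, ?_⟩⟩
  have hx : ((h x).1 : V) + (h x).2 = φ x := congr(($(LinearMap.congr_fun hh x) : V))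
  simp [← hx]

theorem Submodule.toAddSubgroup_index_ne_zero_of_finrank_eq {M : Type*} [AddCommGroup M]
    [Module.Free ℤ M] [Module.Finite ℤ M] (L : Submodule ℤ M)
    (h : Module.finrank ℤ L = Module.finrank ℤ M) : L.toAddSubgroup.index ≠ 0 := by
  obtain ⟨m, snf⟩ := L.smithNormalForm (Module.Free.chooseBasis ℤ M)
  rw [snf.toAddSubgroup_index_ne_zero_iff]
  rwa [Module.finrank_eq_card_basis snf.bN, Module.finrank_eq_card_chooseBasisIndex,
    Fintype.card_fin] at h

section Saturated

variable {N : Type*} [AddCommGroup N] {γ γ' : AddSubgroup N}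

theorem IsSaturated.inf (h : IsSaturated γ) (h' : IsSaturated γ') : IsSaturated (γ ⊓ γ') := by
  intro k x hx
  rcases h k x (AddSubgroup.mem_inf.mp hx).1 with hk | hx₁
  · exact .inl hk
  rcases h' k x (AddSubgroup.mem_inf.mp hx).2 with hk | hx₂
  · exact .inl hk
  exact .inr (AddSubgroup.mem_inf.mpr ⟨hx₁, hx₂⟩)

theorem IsSaturated.mem_of_nsmul_mem (h : IsSaturated γ) {d : ℕ} (hd : d ≠ 0) {x : N}
    (hx : d • x ∈ γ) : x ∈ γ :=
  (h d x (by rwa [natCast_zsmul])).resolve_left (by exact_mod_cast hd)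

theorem IsSaturated.isTorsionFree_quotient (h : IsSaturated γ) :
    Module.IsTorsionFree ℤ (N ⧸ γ.toIntSubmodule) := by
  refine .of_smul_eq_zero fun k y hy => ?_
  obtain ⟨x, rfl⟩ := Submodule.mkQ_surjective _ y
  rw [← map_smul, Submodule.mkQ_apply, Submodule.Quotient.mk_eq_zero] at hy
  rw [Submodule.mkQ_apply, Submodule.Quotient.mk_eq_zero]
  exact h k x hy

/-- The coordinate functionals of the free module `N ⧸ γ` pull back to elements of `perp γ`. -/
theorem IsSaturated.exists_sub_smul_mem [Module.Finite ℤ N] (h : IsSaturated γ) {d : ℤ} {z : N}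
    (hz : ∀ f ∈ perp γ, d ∣ f z) : ∃ w, z - d • w ∈ γ := by
  have := h.isTorsionFree_quotient
  set L := γ.toIntSubmodule
  let b := Module.Free.chooseBasis ℤ (N ⧸ L)
  have hcoord : ∀ i, d ∣ b.repr (L.mkQ z) i := fun i =>
    hz ((b.coord i).comp L.mkQ).toAddMonoidHom fun x hx => by
      simp [(Submodule.Quotient.mk_eq_zero L).mpr hx]
  choose t ht using hcoord
  obtain ⟨w, hw⟩ := L.mkQ_surjective (∑ i, t i • b i)
  refine ⟨w, (Submodule.Quotient.mk_eq_zero L).mp ?_⟩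
  rw [← Submodule.mkQ_apply, map_sub, map_smul, hw, Finset.smul_sum, sub_eq_zero]
  conv_lhs => rw [← b.sum_repr (L.mkQ z)]
  simp only [ht, mul_smul]

end Saturated

section Splitting

variable {N : Type*} [AddCommGroup N] {γ₁ γ₂ : AddSubgroup N} {d : ℕ} {c : N →+ N}
  {f : N →+ ℤ}

def IsSplitting (γ₁ γ₂ : AddSubgroup N) (d : ℕ) (c : N →+ N) : Prop :=
  ∀ x, c x ∈ γ₁ ∧ d • x - c x ∈ γ₂

theorem exists_isSplitting_of_nsmul_mem_sup [Module.Free ℤ N] (h : ∀ x : N, d • x ∈ γ₁ ⊔ γ₂) :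
    ∃ c, IsSplitting γ₁ γ₂ d c := by
  obtain ⟨c, hc⟩ := Submodule.exists_linearMap_mem_and_sub_mem
    (A := AddSubgroup.toIntSubmodule γ₁) (B := AddSubgroup.toIntSubmodule γ₂)
    (d • LinearMap.id) fun x => by
      rw [← OrderIso.map_sup]
      exact h x
  exact ⟨c.toAddMonoidHom, hc⟩

namespace IsSplitting

theorem apply_of_mem_left (hc : IsSplitting γ₁ γ₂ d c) (hf : f ∈ perp (γ₁ ⊓ γ₂)) {y : N}
    (hy : y ∈ γ₁) : f (c y) = d * f y := by
  have h := hf _ (AddSubgroup.mem_inf.mpr ⟨sub_mem (nsmul_mem hy d) (hc y).1, (hc y).2⟩)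
  rw [map_sub, map_nsmul, nsmul_eq_mul, sub_eq_zero] at h
  exact h.symm

theorem apply_of_mem_right (hc : IsSplitting γ₁ γ₂ d c) (hf : f ∈ perp (γ₁ ⊓ γ₂)) {y : N}
    (hy : y ∈ γ₂) : f (c y) = 0 :=
  hf _ (AddSubgroup.mem_inf.mpr ⟨(hc y).1, by simpa using sub_mem (nsmul_mem hy d) (hc y).2⟩)

theorem dvd_apply_of_mem_sup (hc : IsSplitting γ₁ γ₂ d c) (hf : f ∈ perp (γ₁ ⊓ γ₂)) {x : N}
    (hx : x ∈ γ₁ ⊔ γ₂) : (d : ℤ) ∣ f (c x) := by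
  obtain ⟨u, hu, v, hv, rfl⟩ := AddSubgroup.mem_sup.mp hx
  exact ⟨f u, by rw [map_add, map_add, hc.apply_of_mem_left hf hu, hc.apply_of_mem_right hf hv,
    add_zero]⟩

theorem mem_sup_of_dvd_apply [Module.Finite ℤ N] (hc : IsSplitting γ₁ γ₂ d c)
    (h₁ : IsSaturated γ₁) (h₂ : IsSaturated γ₂) (hd : d ≠ 0) {x : N}
    (hx : ∀ f ∈ perp (γ₁ ⊓ γ₂), (d : ℤ) ∣ f (c x)) : x ∈ γ₁ ⊔ γ₂ := by
  obtain ⟨w, hw⟩ := (h₁.inf h₂).exists_sub_smul_mem hx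
  obtain ⟨hw₁, hw₂⟩ := AddSubgroup.mem_inf.mp hw
  rw [natCast_zsmul] at hw₁ hw₂
  have hw : w ∈ γ₁ := h₁.mem_of_nsmul_mem hd (by simpa using sub_mem (hc x).1 hw₁)
  have hxw : x - w ∈ γ₂ := h₂.mem_of_nsmul_mem hd <| by
    convert add_mem (hc x).2 hw₂ using 1
    rw [nsmul_sub]
    abel
  simpa using add_mem (AddSubgroup.mem_sup_left hw) (AddSubgroup.mem_sup_right hxw)

theorem dvd_apply_of_mem_perp_sup (hc : IsSplitting γ₁ γ₂ d c) (hf : f ∈ perp γ₁ ⊔ perp γ₂)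
    (x : N) : (d : ℤ) ∣ f (c x) := by
  obtain ⟨f₁, hf₁, f₂, hf₂, rfl⟩ := AddSubgroup.mem_sup.mp hf
  refine ⟨f₂ x, ?_⟩
  have h := hf₂ _ (hc x).2
  rw [map_sub, map_nsmul, nsmul_eq_mul, sub_eq_zero] at h
  rw [AddMonoidHom.add_apply, hf₁ _ (hc x).1, zero_add, h]

theorem mem_perp_sup_of_dvd_apply (hc : IsSplitting γ₁ γ₂ d c) (hd : d ≠ 0)
    (hf : f ∈ perp (γ₁ ⊓ γ₂)) (h : ∀ x, (d : ℤ) ∣ f (c x)) : f ∈ perp γ₁ ⊔ perp γ₂ := by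
  have hd' : (d : ℤ) ≠ 0 := by exact_mod_cast hd
  choose g hg using h
  let g' : N →+ ℤ := AddMonoidHom.mk' g fun x y => mul_left_cancel₀ hd' <| by
    rw [← hg, mul_add, ← hg, ← hg, map_add, map_add]
  have hg₂ : g' ∈ perp γ₂ := fun y hy => mul_left_cancel₀ hd' <| by
    rw [mul_zero, AddMonoidHom.mk'_apply, ← hg, hc.apply_of_mem_right hf hy]
  have hg₁ : f - g' ∈ perp γ₁ := fun y hy => by
    have : g y = f y := mul_left_cancel₀ hd' <| by
      rw [← hg, hc.apply_of_mem_left hf hy]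
    simp [g', this]
  exact AddSubgroup.mem_sup.mpr ⟨f - g', hg₁, g', hg₂, sub_add_cancel f g'⟩

end IsSplitting

end Splitting

section ModPairing

variable {N : Type*} [AddCommGroup N]

def modPairing (c : N →+ N) (d : ℕ) : (N →+ ℤ) →+ N →+ ZMod d :=
  AddMonoidHom.mk' (fun f => (Int.castAddHom (ZMod d)).comp (f.comp c)) fun f g => by
    ext
    simp

theorem modPairing_apply (c : N →+ N) (d : ℕ) (f : N →+ ℤ) (x : N) :
    modPairing c d f x = (f (c x) : ZMod d) :=
  rfl

variable {γ₁ γ₂ : AddSubgroup N} {d : ℕ} {c : N →+ N}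

theorem IsSplitting.ker_flip_modPairing [Module.Finite ℤ N] (hc : IsSplitting γ₁ γ₂ d c)
    (h₁ : IsSaturated γ₁) (h₂ : IsSaturated γ₂) (hd : d ≠ 0) :
    ((modPairing c d).comp (perp (γ₁ ⊓ γ₂)).subtype).flip.ker = γ₁ ⊔ γ₂ := by
  ext x
  simp only [AddMonoidHom.mem_ker, AddMonoidHom.ext_iff, AddMonoidHom.flip_apply,
    AddMonoidHom.comp_apply, AddSubgroup.coe_subtype, modPairing_apply,
    ZMod.intCast_zmod_eq_zero_iff_dvd, AddMonoidHom.zero_apply, Subtype.forall]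
  exact ⟨hc.mem_sup_of_dvd_apply h₁ h₂ hd, fun hx f hf => hc.dvd_apply_of_mem_sup hf hx⟩

theorem IsSplitting.ker_modPairing (hc : IsSplitting γ₁ γ₂ d c) (hd : d ≠ 0) :
    ((modPairing c d).comp (perp (γ₁ ⊓ γ₂)).subtype).ker =
      (perp γ₁ ⊔ perp γ₂).addSubgroupOf (perp (γ₁ ⊓ γ₂)) := by
  ext ⟨f, hf⟩
  simp only [AddMonoidHom.mem_ker, AddMonoidHom.ext_iff, AddMonoidHom.comp_apply,
    AddSubgroup.coe_subtype, modPairing_apply, ZMod.intCast_zmod_eq_zero_iff_dvd,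
    AddMonoidHom.zero_apply, AddSubgroup.mem_addSubgroupOf]
  exact ⟨hc.mem_perp_sup_of_dvd_apply hd hf, hc.dvd_apply_of_mem_perp_sup⟩

end ModPairing

/-- Let `N` be a free abelian group of finite rank `n` and `γ₁, γ₂` saturated subgroups
such that `γ₁ + γ₂` has rank `n`.  Then `[N : γ₁ + γ₂] = [(γ₁ ∩ γ₂)^⊥ : γ₁^⊥ + γ₂^⊥]`,
the orthogonals being taken in the dual lattice `M = Hom(N, ℤ)`; in particular the
index on the right-hand side is finite. -/
theorem stmt_10 {N : Type*} [AddCommGroup N] [Module.Free ℤ N] [Module.Finite ℤ N]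
    (n : ℕ) (hn : Module.finrank ℤ N = n)
    (γ₁ γ₂ : AddSubgroup N) (h₁ : IsSaturated γ₁) (h₂ : IsSaturated γ₂)
    (hrank : Module.finrank ℤ (AddSubgroup.toIntSubmodule (γ₁ ⊔ γ₂)) = n) :
    (γ₁ ⊔ γ₂).index = (perp γ₁ ⊔ perp γ₂).relIndex (perp (γ₁ ⊓ γ₂)) ∧
      (perp γ₁ ⊔ perp γ₂).relIndex (perp (γ₁ ⊓ γ₂)) ≠ 0 := by
  have hd : (γ₁ ⊔ γ₂).index ≠ 0 := by
    simpa only [AddSubgroup.toIntSubmodule_toAddSubgroup] using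
      (AddSubgroup.toIntSubmodule (γ₁ ⊔ γ₂)).toAddSubgroup_index_ne_zero_of_finrank_eq
        (hrank.trans hn.symm)
  set d := (γ₁ ⊔ γ₂).index
  have : NeZero d := ⟨hd⟩
  obtain ⟨c, hc⟩ := exists_isSplitting_of_nsmul_mem_sup (γ₁ ⊔ γ₂).nsmul_index_mem
  have hright := hc.ker_flip_modPairing h₁ h₂ hd
  have : ((modPairing c d).comp (perp (γ₁ ⊓ γ₂)).subtype).flip.ker.FiniteIndex := ⟨hright ▸ hd⟩
  rw [AddSubgroup.relIndex, ← hc.ker_modPairing hd, AddMonoidHom.index_ker_eq_index_ker_flip,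
    hright]
  exact ⟨rfl, hd⟩
end

section
/- Let N be a free abelian group of finite rank n and let γ₁, γ₂ be saturated subgroups of N such that γ₁ ∩ γ₂ = {0} and the subgroup γ₁ + γ₂ has rank n (equivalently, finite index in N). Then [N : γ₁ + γ₂] = [M : γ₁^⊥ + γ₂^⊥], where M = Hom(N, ℤ) is the dual lattice. -/
/-!
Since `γ₂` is saturated, `Q = N/γ₂` is a lattice, and since `γ₁ ∩ γ₂ = 0` and `γ₁ + γ₂` has full
rank, `g : γ₁ → Q` is injective with image of finite index, and `[N : γ₁ + γ₂] = [Q : g γ₁]`.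
Since `γ₁` is saturated it is a direct summand of `N`, so restriction `M → γ₁^*` is onto with
kernel `γ₁^⊥`, while `γ₂^⊥` is the image of `Q^*`; hence `[M : γ₁^⊥ + γ₂^⊥] = [γ₁^* : g^* Q^*]`.
Composing `g` with an isomorphism `Q ≅ γ₁` turns both indices into `|det|` of an endomorphism
and of its transpose.
-/

open Module Submodule LinearMap

namespace Submodule

section Ring

variable {R M M₂ : Type*} [Ring R] [AddCommGroup M] [Module R M] [AddCommGroup M₂] [Module R M₂]

theorem index_comap_of_surjective {f : M →ₗ[R] M₂} (hf : Function.Surjective f)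
    (p : Submodule R M₂) : (p.comap f).toAddSubgroup.index = p.toAddSubgroup.index :=
  p.toAddSubgroup.index_comap_of_surjective (f := f.toAddMonoidHom) hf

theorem index_sup_eq_index_range_mkQ_comp_subtype (p q : Submodule R M) :
    (p ⊔ q).toAddSubgroup.index = (range (q.mkQ ∘ₗ p.subtype)).toAddSubgroup.index := by
  have hsup : p ⊔ q = (range (q.mkQ ∘ₗ p.subtype)).comap q.mkQ := by
    rw [range_comp, range_subtype, comap_map_eq, ker_mkQ]
  rw [hsup, index_comap_of_surjective q.mkQ_surjective]

theorem isComplemented_of_projective_quotient (p : Submodule R M) [Projective R (M ⧸ p)] :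
    IsComplemented p := by
  obtain ⟨σ, hσ⟩ := p.mkQ.exists_rightInverse_of_surjective p.range_mkQ
  have hidem : IsIdempotentElem (σ ∘ₗ p.mkQ) := by
    rw [IsIdempotentElem, Module.End.mul_eq_comp, comp_assoc, ← comp_assoc p.mkQ, hσ, id_comp]
  have hker : ker (σ ∘ₗ p.mkQ) = p := by
    rw [ker_comp_of_ker_eq_bot _ (ker_eq_bot_of_inverse hσ), ker_mkQ]
  exact ⟨_, hker ▸ hidem.isCompl.symm⟩

end Ring

variable {R M : Type*} [CommRing R] [AddCommGroup M] [Module R M]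

theorem index_dualAnnihilator_sup (p q : Submodule R M) (hp : IsComplemented p) :
    (p.dualAnnihilator ⊔ q.dualAnnihilator).toAddSubgroup.index =
      (range (q.mkQ ∘ₗ p.subtype).dualMap).toAddSubgroup.index := by
  have hsup : p.dualAnnihilator ⊔ q.dualAnnihilator =
      (range (q.mkQ ∘ₗ p.subtype).dualMap).comap p.subtype.dualMap := by
    rw [← dualMap_comp_dualMap, range_comp, range_dualMap_mkQ_eq, comap_map_eq,
      ← dualRestrict_def, dualRestrict_ker_eq_dualAnnihilator, sup_comm]
  rw [hsup, index_comap_of_surjective (surjective_comp_subtype_of_isComplemented hp)]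

end Submodule

namespace LinearMap

variable {L M : Type*} [AddCommGroup L] [AddCommGroup M]

theorem dualMap_injective_of_index_ne_zero {f : L →ₗ[ℤ] M}
    (hf : (range f).toAddSubgroup.index ≠ 0) : Function.Injective f.dualMap := by
  refine (injective_iff_map_eq_zero _).2 fun φ hφ => ?_
  ext x
  obtain ⟨y, hy⟩ := (range f).toAddSubgroup.nsmul_index_mem x
  have : (range f).toAddSubgroup.index • φ x = 0 := by
    rw [← map_nsmul, ← hy]
    exact LinearMap.congr_fun hφ y
  simpa [hf] using this

variable [Free ℤ M] [Module.Finite ℤ M]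

theorem index_range_eq_natAbs_det {f : M →ₗ[ℤ] M} (hf : Function.Injective f) :
    (range f).toAddSubgroup.index = (LinearMap.det f).natAbs :=
  ((range f).natAbs_det_equiv (LinearEquiv.ofInjective f hf)).symm

theorem index_range_dualMap [Free ℤ L] [Module.Finite ℤ L] {g : L →ₗ[ℤ] M}
    (hg : Function.Injective g) (hfin : (range g).toAddSubgroup.index ≠ 0) :
    (range g.dualMap).toAddSubgroup.index = (range g).toAddSubgroup.index := by
  have hrank : finrank ℤ M = finrank ℤ L := by
    rw [← finrank_range_of_inj hg]
    exact ((finiteQuotient_iff _).1 (AddSubgroup.index_ne_zero_iff_finite.1 hfin)).symm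
  let e := LinearEquiv.ofFinrankEq M L hrank
  set f := g ∘ₗ e.toLinearMap
  have hrange : range f = range g := range_comp_of_range_eq_top g e.range
  have hdual : range f.dualMap = (range g.dualMap).comap e.symm.dualMap.toLinearMap := by
    rw [← dualMap_comp_dualMap, range_comp]
    exact map_equiv_eq_comap_symm e.dualMap _
  have hfdual : Function.Injective f.dualMap :=
    dualMap_injective_of_index_ne_zero (hrange ▸ hfin)
  -- `f` is an endomorphism, so both indices are `|det f|`, transposition preserving `det`.
  rw [← index_comap_of_surjective e.symm.dualMap.surjective, ← hdual, ← hrange,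
    index_range_eq_natAbs_det hfdual, index_range_eq_natAbs_det (f := f) (hg.comp e.injective),
    det_dualMap]

end LinearMap

theorem perp_eq_comap_dualAnnihilator {N : Type*} [AddCommGroup N] (γ : AddSubgroup N) :
    perp γ = ((AddSubgroup.toIntSubmodule γ).dualAnnihilator.comap
      (addMonoidHomLequivInt ℤ : (N →+ ℤ) ≃ₗ[ℤ] Dual ℤ N).toLinearMap).toAddSubgroup := by
  ext f
  rw [mem_toAddSubgroup, mem_comap, mem_dualAnnihilator]
  exact Iff.rfl

theorem IsSaturated.isTorsionFree_quotient_s11 {N : Type*} [AddCommGroup N] {γ : AddSubgroup N}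
    (h : IsSaturated γ) : IsTorsionFree ℤ (N ⧸ AddSubgroup.toIntSubmodule γ) := by
  refine IsTorsionFree.of_smul_eq_zero fun k y hky => ?_
  obtain ⟨x, rfl⟩ := Submodule.mkQ_surjective _ y
  rw [← map_smul, mkQ_apply, Quotient.mk_eq_zero] at hky
  rw [mkQ_apply, Quotient.mk_eq_zero]
  exact h k x hky

theorem index_perp_sup_perp {N : Type*} [AddCommGroup N] [Module.Finite ℤ N]
    (γ₁ γ₂ : AddSubgroup N) (h₁ : IsSaturated γ₁) :
    (perp γ₁ ⊔ perp γ₂).index = (range ((AddSubgroup.toIntSubmodule γ₂).mkQ ∘ₗ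
      (AddSubgroup.toIntSubmodule γ₁).subtype).dualMap).toAddSubgroup.index := by
  have := h₁.isTorsionFree_quotient_s11
  rw [perp_eq_comap_dualAnnihilator, perp_eq_comap_dualAnnihilator, ← sup_toAddSubgroup,
    comap_equiv_eq_map_symm, comap_equiv_eq_map_symm, ← Submodule.map_sup,
    ← comap_equiv_eq_map_symm,
    index_comap_of_surjective (addMonoidHomLequivInt ℤ).surjective,
    index_dualAnnihilator_sup _ _ (isComplemented_of_projective_quotient _)]

/-- Let `N` be a free abelian group of finite rank `n` and `γ₁, γ₂` saturated subgroups
with `γ₁ ∩ γ₂ = {0}` and such that `γ₁ + γ₂` has rank `n`.  Then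
`[N : γ₁ + γ₂] = [M : γ₁^⊥ + γ₂^⊥]` where `M = Hom(N, ℤ)` is the dual lattice. -/
theorem stmt_11 {N : Type*} [AddCommGroup N] [Module.Free ℤ N] [Module.Finite ℤ N]
    (n : ℕ) (hn : Module.finrank ℤ N = n)
    (γ₁ γ₂ : AddSubgroup N) (h₁ : IsSaturated γ₁) (h₂ : IsSaturated γ₂)
    (hdisj : γ₁ ⊓ γ₂ = ⊥)
    (hrank : Module.finrank ℤ (AddSubgroup.toIntSubmodule (γ₁ ⊔ γ₂)) = n) :
    (γ₁ ⊔ γ₂).index = (perp γ₁ ⊔ perp γ₂).index := by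
  set S₁ := AddSubgroup.toIntSubmodule γ₁
  set S₂ := AddSubgroup.toIntSubmodule γ₂
  have := h₂.isTorsionFree_quotient_s11
  have hsup : AddSubgroup.toIntSubmodule (γ₁ ⊔ γ₂) = S₁ ⊔ S₂ := map_sup _ _ _
  have hfin : (S₁ ⊔ S₂).toAddSubgroup.index ≠ 0 :=
    AddSubgroup.index_ne_zero_iff_finite.2
      (finiteQuotientOfFreeOfRankEq (S₁ ⊔ S₂) (hsup ▸ hrank.trans hn.symm))
  have hinj : Function.Injective (S₂.mkQ ∘ₗ S₁.subtype) := by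
    rw [← ker_eq_bot, ker_comp, ker_mkQ, ← disjoint_iff_comap_eq_bot, disjoint_iff,
      ← OrderIso.map_inf, hdisj, OrderIso.map_bot]
  rw [index_sup_eq_index_range_mkQ_comp_subtype] at hfin
  calc (γ₁ ⊔ γ₂).index = (range (S₂.mkQ ∘ₗ S₁.subtype)).toAddSubgroup.index := by
        rw [← AddSubgroup.toIntSubmodule_toAddSubgroup (γ₁ ⊔ γ₂), hsup,
          index_sup_eq_index_range_mkQ_comp_subtype]
    _ = (range (S₂.mkQ ∘ₗ S₁.subtype).dualMap).toAddSubgroup.index :=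
        (index_range_dualMap hinj hfin).symm
    _ = (perp γ₁ ⊔ perp γ₂).index := (index_perp_sup_perp γ₁ γ₂ h₁).symm
end
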